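/- arXiv:math/0605053 — 11 statements merged into one kernel-verified Lean document; each statement's English description precedes it below -/
import Mathlib

section
/- There exists a constant K > 0 such that ⟨x − y, V(x) − V(y)⟩ ≤ K ‖x − y‖² for all x, y ∈ ℝ^d. -/
open scoped RealInnerProductSpace

/-!
On the ball `‖x‖ ≤ R₀` the quadratic form `h ↦ ⟪h, DV(x) h⟫` is bounded by `sup ‖DV‖ · ‖h‖²`
(finite by compactness), and outside it is negative by dissipativity. Hence
`⟪h, DV(z) h⟫ ≤ K ‖h‖²` everywhere, and integrating along the segment from `y` to `x`
gives `⟪x - y, V x - V y⟫ ≤ K ‖x - y‖²`.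
-/

section OneSidedLipschitz

variable {E : Type*} [NormedAddCommGroup E] [InnerProductSpace ℝ E]

theorem real_inner_apply_self_le_opNorm_mul_sq (A : E →L[ℝ] E) (h : E) :
    ⟪h, A h⟫ ≤ ‖A‖ * ‖h‖ ^ 2 :=
  calc ⟪h, A h⟫ ≤ ‖h‖ * ‖A h‖ := real_inner_le_norm _ _
    _ ≤ ‖h‖ * (‖A‖ * ‖h‖) := by gcongr; exact A.le_opNorm h
    _ = ‖A‖ * ‖h‖ ^ 2 := by ring

theorem real_inner_apply_self_le_mul_sq_of_norm_eq_one (A : E →L[ℝ] E) {c : ℝ}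
    (hA : ∀ u : E, ‖u‖ = 1 → ⟪u, A u⟫ ≤ c) (h : E) : ⟪h, A h⟫ ≤ c * ‖h‖ ^ 2 := by
  rcases eq_or_ne h 0 with rfl | hh
  · simp
  have hn : 0 < ‖h‖ := norm_pos_iff.mpr hh
  set u := ‖h‖⁻¹ • h
  have hu : ‖u‖ = 1 := norm_smul_inv_norm hh
  have hhu : h = ‖h‖ • u := by simp [u, smul_smul, hn.ne']
  calc ⟪h, A h⟫ = ‖h‖ ^ 2 * ⟪u, A u⟫ := by
        rw [hhu, map_smul, real_inner_smul_left, real_inner_smul_right, ← hhu]; ring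
    _ ≤ ‖h‖ ^ 2 * c := by gcongr; exact hA u hu
    _ = c * ‖h‖ ^ 2 := mul_comm _ _

theorem real_inner_sub_le_of_real_inner_fderiv_le {V : E → E} (hV : Differentiable ℝ V)
    {C : ℝ} (hC : ∀ z h : E, ⟪h, fderiv ℝ V z h⟫ ≤ C * ‖h‖ ^ 2) (x y : E) :
    ⟪x - y, V x - V y⟫ ≤ C * ‖x - y‖ ^ 2 := by
  set v := x - y
  have hderiv : ∀ t : ℝ, HasDerivAt (fun t : ℝ => ⟪v, V (y + t • v)⟫)
      ⟪v, fderiv ℝ V (y + t • v) v⟫ t := by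
    intro t
    have hline : HasDerivAt (fun t : ℝ => y + t • v) v t := by
      simpa using ((hasDerivAt_id t).smul_const v).const_add y
    simpa using (hasDerivAt_const t v).inner ℝ
      ((hV (y + t • v)).hasFDerivAt.comp_hasDerivAt t hline)
  have hmvt := image_sub_le_mul_sub_of_deriv_le (fun t => (hderiv t).differentiableAt)
    (fun t => (hderiv t).deriv ▸ hC (y + t • v) v) zero_le_one
  have hyv : y + v = x := add_sub_cancel y x
  simpa [hyv, inner_sub_right] using hmvt

end OneSidedLipschitz

theorem lemma_2_2_a_general (d : ℕ)
    (V : EuclideanSpace ℝ (Fin d) → EuclideanSpace ℝ (Fin d))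
    (hV : ContDiff ℝ 1 V)
    (K_V R₀ : ℝ) (hKV : 0 < K_V)
    (hdiss : ∀ (h x : EuclideanSpace ℝ (Fin d)), ‖h‖ = 1 → R₀ ≤ ‖x‖ →
      ⟪h, fderiv ℝ V x h⟫ ≤ -K_V) :
    ∃ K : ℝ, 0 < K ∧ ∀ x y : EuclideanSpace ℝ (Fin d),
      ⟪x - y, V x - V y⟫ ≤ K * ‖x - y‖ ^ 2 := by
  obtain ⟨M, hM⟩ := (isCompact_closedBall (0 : EuclideanSpace ℝ (Fin d)) R₀)
    |>.exists_bound_of_continuousOn (hV.continuous_fderiv one_ne_zero).continuousOn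
  refine ⟨max M 1, by positivity, real_inner_sub_le_of_real_inner_fderiv_le
    (hV.differentiable one_ne_zero) (fun z h => ?_)⟩
  rcases le_or_gt ‖z‖ R₀ with hz | hz
  · have hMz : ‖fderiv ℝ V z‖ ≤ max M 1 :=
      (hM z (mem_closedBall_zero_iff.mpr hz)).trans (le_max_left _ _)
    exact (real_inner_apply_self_le_opNorm_mul_sq _ h).trans (by gcongr)
  · calc ⟪h, fderiv ℝ V z h⟫ ≤ -K_V * ‖h‖ ^ 2 :=
          real_inner_apply_self_le_mul_sq_of_norm_eq_one _ (fun u hu => hdiss u z hu hz.le) h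
      _ ≤ max M 1 * ‖h‖ ^ 2 := by gcongr; linarith [le_max_right M 1]

/-- Lemma 2.2(a): under the dissipativity-at-infinity assumption on `DV`, the vector field
`V` satisfies a one-sided Lipschitz (monotonicity) bound globally. -/
theorem lemma_2_2_a (d : ℕ) (hd : 1 ≤ d)
    (V : EuclideanSpace ℝ (Fin d) → EuclideanSpace ℝ (Fin d))
    (hV : ContDiff ℝ 1 V)
    (K_V R₀ : ℝ) (hKV : 0 < K_V) (hR₀ : 0 < R₀)
    (hdiss : ∀ (h x : EuclideanSpace ℝ (Fin d)), ‖h‖ = 1 → R₀ ≤ ‖x‖ →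
      ⟪h, fderiv ℝ V x h⟫ ≤ -K_V) :
    ∃ K : ℝ, 0 < K ∧ ∀ x y : EuclideanSpace ℝ (Fin d),
      ⟪x - y, V x - V y⟫ ≤ K * ‖x - y‖ ^ 2 :=
  lemma_2_2_a_general d V hV K_V R₀ hKV hdiss
end

section
/- There exist constants η > 0 and R_1 > 0 such that for all x, y ∈ ℝ^d with ‖x − y‖ ≥ R_1 one has ⟨x − y, V(x) − V(y)⟩ ≤ −η ‖x − y‖². -/
/-!
With `u = x - y`, the fundamental theorem of calculus along the segment gives
`⟪u, V x - V y⟫ = ∫₀¹ ⟪u, DV(y + t u) u⟫ dt`. The integrand is at most `-K‖u‖²` while the segment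
is outside the ball of radius `R₀`, and at most `M‖u‖²` inside it, where `M` bounds `‖DV‖` on the
ball. The segment is traversed at speed `‖u‖`, so it spends time at most `2R₀/‖u‖` in the ball, and
`⟪u, V x - V y⟫ ≤ -K‖u‖² + 2R₀(M + K)‖u‖`, which is at most `-(K/2)‖u‖²` for `‖u‖` large.
-/

open scoped RealInnerProductSpace
open MeasureTheory Set

theorem volume_setOf_norm_add_smul_lt_le {E : Type*} [NormedAddCommGroup E] [NormedSpace ℝ E]
    (y : E) {u : E} (hu : u ≠ 0) (R : ℝ) :
    volume {t : ℝ | ‖y + t • u‖ < R} ≤ ENNReal.ofReal (2 * R / ‖u‖) := by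
  refine (Real.volume_le_diam _).trans (Metric.ediam_le fun s hs t ht => ?_)
  rw [edist_dist]
  refine ENNReal.ofReal_le_ofReal ?_
  rw [Real.dist_eq, le_div_iff₀ (norm_pos_iff.2 hu)]
  calc |s - t| * ‖u‖ = ‖(y + s • u) - (y + t • u)‖ := by
        rw [add_sub_add_left_eq_sub, ← sub_smul, norm_smul, Real.norm_eq_abs]
    _ ≤ ‖y + s • u‖ + ‖y + t • u‖ := norm_sub_le _ _
    _ ≤ 2 * R := by rw [mem_ofPred_eq] at hs ht; linarith

theorem intervalIntegral_zero_one_le_add_mul_measureReal {g : ℝ → ℝ}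
    (hg : IntervalIntegrable g volume 0 1) {S : Set ℝ} (hS : MeasurableSet S)
    (hSfin : volume S ≠ ⊤) {a b : ℝ} (hab : a ≤ b) (hout : ∀ t ∉ S, g t ≤ a)
    (hin : ∀ t ∈ S, g t ≤ b) :
    ∫ t in 0..1, g t ≤ a + (b - a) * volume.real S := by
  have hind : IntervalIntegrable (S.indicator (1 : ℝ → ℝ)) volume 0 1 :=
    (integrable_indicator_iff hS).2 (integrableOn_const hSfin) |>.intervalIntegrable
  have hpt : ∀ t, g t ≤ a + (b - a) * S.indicator 1 t := fun t => by
    by_cases ht : t ∈ S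
    · simpa [ht] using hin t ht
    · simpa [ht] using hout t ht
  calc ∫ t in 0..1, g t ≤ ∫ t in 0..1, (a + (b - a) * S.indicator 1 t) :=
        intervalIntegral.integral_mono_on zero_le_one hg
          (intervalIntegrable_const.add (hind.const_mul _)) fun t _ => hpt t
    _ = a + (b - a) * volume.real (S ∩ Ioc 0 1) := by
        rw [intervalIntegral.integral_add intervalIntegrable_const (hind.const_mul _),
          intervalIntegral.integral_of_le zero_le_one,
          intervalIntegral.integral_const_mul, intervalIntegral.integral_of_le zero_le_one,
          integral_indicator_one hS, measureReal_restrict_apply hS]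
        simp
    _ ≤ a + (b - a) * volume.real S := by
        gcongr
        exact inter_subset_left

theorem inner_sub_eq_integral_inner_fderiv {E F : Type*} [NormedAddCommGroup E] [NormedSpace ℝ E]
    [NormedAddCommGroup F] [InnerProductSpace ℝ F] {V : E → F} (hV : ContDiff ℝ 1 V)
    (w : F) (y u : E) :
    ⟪w, V (y + u) - V y⟫ = ∫ t in 0..1, ⟪w, fderiv ℝ V (y + t • u) u⟫ := by
  have hline : ∀ t : ℝ, HasDerivAt (fun s : ℝ => y + s • u) u t := fun t => by
    simpa using ((hasDerivAt_id t).smul_const u).const_add y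
  have hderiv : ∀ t : ℝ, HasDerivAt (fun s : ℝ => ⟪w, V (y + s • u)⟫)
      ⟪w, fderiv ℝ V (y + t • u) u⟫ t := fun t =>
    (innerSL ℝ w).hasFDerivAt.comp_hasDerivAt t
      ((hV.differentiable one_ne_zero _).hasFDerivAt.comp_hasDerivAt t (hline t))
  have hcont : Continuous fun t : ℝ => ⟪w, fderiv ℝ V (y + t • u) u⟫ := by
    have := hV.continuous_fderiv one_ne_zero
    fun_prop
  rw [intervalIntegral.integral_eq_sub_of_hasDerivAt (fun t _ => hderiv t)
    (hcont.intervalIntegrable 0 1)]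
  simp [inner_sub_right]

theorem inner_apply_self_le_neg_mul_norm_sq {E : Type*} [NormedAddCommGroup E]
    [InnerProductSpace ℝ E] {A : E →L[ℝ] E} {K : ℝ} (hA : ∀ h, ‖h‖ = 1 → ⟪h, A h⟫ ≤ -K)
    (h : E) : ⟪h, A h⟫ ≤ -K * ‖h‖ ^ 2 := by
  rcases eq_or_ne h 0 with rfl | hh
  · simp
  have hn : 0 < ‖h‖ := norm_pos_iff.2 hh
  have hunit := hA (‖h‖⁻¹ • h) (by rw [norm_smul, norm_inv, norm_norm, inv_mul_cancel₀ hn.ne'])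
  rw [map_smul, real_inner_smul_left, real_inner_smul_right, ← mul_assoc, ← sq,
    inv_pow] at hunit
  have := mul_le_mul_of_nonneg_left hunit (sq_nonneg ‖h‖)
  rwa [← mul_assoc, mul_inv_cancel₀ (pow_ne_zero 2 hn.ne'), one_mul, mul_comm] at this

theorem inner_sub_le_of_fderiv_bounds {E : Type*} [NormedAddCommGroup E] [InnerProductSpace ℝ E]
    {V : E → E} (hV : ContDiff ℝ 1 V) {K M R : ℝ} (hR : 0 ≤ R) (hMK : 0 ≤ M + K)
    (hfar : ∀ z h, R ≤ ‖z‖ → ⟪h, fderiv ℝ V z h⟫ ≤ -K * ‖h‖ ^ 2)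
    (hnear : ∀ z, ‖z‖ < R → ‖fderiv ℝ V z‖ ≤ M) {x y : E} (hxy : x ≠ y) :
    ⟪x - y, V x - V y⟫ ≤ -K * ‖x - y‖ ^ 2 + 2 * R * (M + K) * ‖x - y‖ := by
  set u := x - y
  have hu : u ≠ 0 := sub_ne_zero.2 hxy
  have hr : 0 < ‖u‖ := norm_pos_iff.2 hu
  set S := {t : ℝ | ‖y + t • u‖ < R}
  have hS : MeasurableSet S := (isOpen_lt (by fun_prop) continuous_const).measurableSet
  have hSvol := volume_setOf_norm_add_smul_lt_le y hu R
  have hcont : Continuous fun t : ℝ => ⟪u, fderiv ℝ V (y + t • u) u⟫ := by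
    have := hV.continuous_fderiv one_ne_zero
    fun_prop
  have hout : ∀ t ∉ S, ⟪u, fderiv ℝ V (y + t • u) u⟫ ≤ -K * ‖u‖ ^ 2 := fun t ht =>
    hfar _ u (not_lt.1 ht)
  have hin : ∀ t ∈ S, ⟪u, fderiv ℝ V (y + t • u) u⟫ ≤ M * ‖u‖ ^ 2 := fun t ht =>
    calc ⟪u, fderiv ℝ V (y + t • u) u⟫ ≤ ‖u‖ * (‖fderiv ℝ V (y + t • u)‖ * ‖u‖) :=
          (real_inner_le_norm _ _).trans (by gcongr; exact ContinuousLinearMap.le_opNorm _ _)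
      _ ≤ M * ‖u‖ ^ 2 := by nlinarith [hnear _ ht]
  calc ⟪u, V x - V y⟫ = ∫ t in 0..1, ⟪u, fderiv ℝ V (y + t • u) u⟫ := by
        rw [← inner_sub_eq_integral_inner_fderiv hV, add_sub_cancel]
    _ ≤ -K * ‖u‖ ^ 2 + (M * ‖u‖ ^ 2 - -K * ‖u‖ ^ 2) * volume.real S :=
        intervalIntegral_zero_one_le_add_mul_measureReal (hcont.intervalIntegrable 0 1) hS
          (ne_top_of_le_ne_top ENNReal.ofReal_ne_top hSvol) (by nlinarith) hout hin
    _ ≤ -K * ‖u‖ ^ 2 + (M * ‖u‖ ^ 2 - -K * ‖u‖ ^ 2) * (2 * R / ‖u‖) := by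
        gcongr
        · nlinarith
        · exact ENNReal.toReal_le_of_le_ofReal (by positivity) hSvol
    _ = -K * ‖u‖ ^ 2 + 2 * R * (M + K) * ‖u‖ := by
        field_simp
        ring

theorem lemma_2_2_b_general (d : ℕ)
    (V : EuclideanSpace ℝ (Fin d) → EuclideanSpace ℝ (Fin d))
    (hV : ContDiff ℝ 1 V)
    (K_V R₀ : ℝ) (hKV : 0 < K_V) (hR₀ : 0 < R₀)
    (hdiss : ∀ (h x : EuclideanSpace ℝ (Fin d)), ‖h‖ = 1 → R₀ ≤ ‖x‖ →
      ⟪h, fderiv ℝ V x h⟫ ≤ -K_V) :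
    ∃ η R₁ : ℝ, 0 < η ∧ 0 < R₁ ∧ ∀ x y : EuclideanSpace ℝ (Fin d),
      R₁ ≤ ‖x - y‖ → ⟪x - y, V x - V y⟫ ≤ -η * ‖x - y‖ ^ 2 := by
  obtain ⟨M, hM⟩ := (isCompact_closedBall 0 R₀).exists_bound_of_continuousOn
    (hV.continuous_fderiv one_ne_zero).continuousOn
  have hnear : ∀ z, ‖z‖ < R₀ → ‖fderiv ℝ V z‖ ≤ M := fun z hz =>
    hM z (mem_closedBall_zero_iff.2 hz.le)
  have hM0 : 0 ≤ M := (norm_nonneg _).trans (hnear 0 (by simpa using hR₀))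
  refine ⟨K_V / 2, 4 * R₀ * (M + K_V) / K_V, by positivity, by positivity, fun x y hxy => ?_⟩
  have hr : 0 < ‖x - y‖ := lt_of_lt_of_le (by positivity) hxy
  have hkey := inner_sub_le_of_fderiv_bounds hV hR₀.le (by positivity)
    (fun z h hz => inner_apply_self_le_neg_mul_norm_sq (fun h hh => hdiss h z hh hz) h) hnear
    (sub_ne_zero.1 (norm_pos_iff.1 hr))
  rw [div_le_iff₀ hKV] at hxy
  nlinarith

/-- Lemma 2.2(b): dissipativity of `V` for pairs of points at large distance. -/
theorem lemma_2_2_b (d : ℕ) (hd : 1 ≤ d)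
    (V : EuclideanSpace ℝ (Fin d) → EuclideanSpace ℝ (Fin d))
    (hV : ContDiff ℝ 1 V)
    (K_V R₀ : ℝ) (hKV : 0 < K_V) (hR₀ : 0 < R₀)
    (hdiss : ∀ (h x : EuclideanSpace ℝ (Fin d)), ‖h‖ = 1 → R₀ ≤ ‖x‖ →
      ⟪h, fderiv ℝ V x h⟫ ≤ -K_V) :
    ∃ η R₁ : ℝ, 0 < η ∧ 0 < R₁ ∧ ∀ x y : EuclideanSpace ℝ (Fin d),
      R₁ ≤ ‖x - y‖ → ⟪x - y, V x - V y⟫ ≤ -η * ‖x - y‖ ^ 2 :=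
  lemma_2_2_b_general d V hV K_V R₀ hKV hR₀ hdiss
end

section
/- There exist constants η > 0 and R_1 > 0 such that ⟨x, V(x)⟩ ≤ −η ‖x‖² for every x ∈ ℝ^d with ‖x‖ ≥ R_1. -/
/-!
Let `y = (R₀ / ‖x‖) • x` be the radial projection of `x` onto the sphere of radius `R₀`. The
segment `[y, x]` stays outside the open ball of radius `R₀`, so the mean value theorem applied to
`t ↦ ⟪x - y, V (y + t • (x - y))⟫` gives `⟪x - y, V x - V y⟫ ≤ -K_V ‖x - y‖²`. Since `V` is bounded
on the compact sphere, this yields `⟪x, V x⟫ ≤ M ‖x‖ - K_V ‖x‖ (‖x‖ - R₀)`, which is at most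
`-(K_V / 2) ‖x‖²` once `‖x‖` is large.
-/

open scoped RealInnerProductSpace

open Set AffineMap

section Dissipativity

variable {E : Type*} [NormedAddCommGroup E] [InnerProductSpace ℝ E]

theorem inner_apply_self_le_neg_mul_sq_norm {A : E →L[ℝ] E} {K : ℝ}
    (hA : ∀ h : E, ‖h‖ = 1 → ⟪h, A h⟫ ≤ -K) (h : E) : ⟪h, A h⟫ ≤ -K * ‖h‖ ^ 2 := by
  rcases eq_or_ne h 0 with rfl | h0
  · simp
  have hpos : 0 < ‖h‖ := norm_pos_iff.mpr h0
  have hunit : ‖‖h‖⁻¹ • h‖ = 1 := by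
    rw [norm_smul, norm_inv, norm_norm, inv_mul_cancel₀ hpos.ne']
  calc ⟪h, A h⟫ = ‖h‖ ^ 2 * ⟪‖h‖⁻¹ • h, A (‖h‖⁻¹ • h)⟫ := by
        rw [map_smul, real_inner_smul_left, real_inner_smul_right]
        field_simp
    _ ≤ ‖h‖ ^ 2 * -K := by gcongr; exact hA _ hunit
    _ = -K * ‖h‖ ^ 2 := mul_comm _ _

theorem inner_sub_map_sub_le_of_fderiv {V : E → E} {x y : E} {K : ℝ}
    (hV : ∀ z ∈ segment ℝ y x, DifferentiableAt ℝ V z)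
    (hK : ∀ z ∈ segment ℝ y x, ⟪x - y, fderiv ℝ V z (x - y)⟫ ≤ -K * ‖x - y‖ ^ 2) :
    ⟪x - y, V x - V y⟫ ≤ -K * ‖x - y‖ ^ 2 := by
  set φ : ℝ → ℝ := fun t ↦ ⟪x - y, V (lineMap y x t)⟫
  have hφ : ∀ t ∈ Icc (0 : ℝ) 1, HasDerivAt φ ⟪x - y, fderiv ℝ V (lineMap y x t) (x - y)⟫ t :=
    fun t ht ↦ ((innerSL ℝ (x - y)).hasFDerivAt.comp_hasDerivAt t <|
      (hV _ (lineMap_mem_segment ℝ y x ht)).hasFDerivAt.comp_hasDerivAt t hasDerivAt_lineMap :)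
  obtain ⟨c, hc, hslope⟩ := exists_hasDerivAt_eq_slope φ _ zero_lt_one
    (fun t ht ↦ (hφ t ht).continuousAt.continuousWithinAt)
    (fun t ht ↦ hφ t (Ioo_subset_Icc_self ht))
  have hφ10 : φ 1 - φ 0 = ⟪x - y, V x - V y⟫ := by simp [φ, inner_sub_right]
  rw [sub_zero, div_one, hφ10] at hslope
  exact hslope ▸ hK _ (lineMap_mem_segment ℝ y x (Ioo_subset_Icc_self hc))

theorem mul_norm_le_norm_of_mem_segment_smul {x z : E} {a : ℝ} (ha₀ : 0 ≤ a) (ha₁ : a ≤ 1)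
    (hz : z ∈ segment ℝ (a • x) x) : a * ‖x‖ ≤ ‖z‖ := by
  obtain ⟨s, t, hs, ht, hst, rfl⟩ := hz
  have hcoef : a ≤ s * a + t := by nlinarith
  rw [smul_smul, ← add_smul, norm_smul, Real.norm_of_nonneg (by positivity)]
  gcongr

theorem inner_map_le_of_fderiv_inner_le {V : E → E} (hV : Differentiable ℝ V) {K R₀ M : ℝ}
    (hR₀ : 0 ≤ R₀)
    (hdiss : ∀ h y : E, ‖h‖ = 1 → R₀ ≤ ‖y‖ → ⟪h, fderiv ℝ V y h⟫ ≤ -K)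
    (hM : ∀ y ∈ Metric.sphere (0 : E) R₀, ‖V y‖ ≤ M) {x : E} (hx : R₀ < ‖x‖) :
    ⟪x, V x⟫ ≤ M * ‖x‖ - K * ‖x‖ * (‖x‖ - R₀) := by
  have hxpos : 0 < ‖x‖ := hR₀.trans_lt hx
  set a := R₀ / ‖x‖
  have ha₀ : 0 ≤ a := by positivity
  have ha₁ : a < 1 := (div_lt_one hxpos).mpr hx
  have hax : a * ‖x‖ = R₀ := div_mul_cancel₀ _ hxpos.ne'
  have hsub : x - a • x = (1 - a) • x := by rw [sub_smul, one_smul]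
  have hmono := inner_sub_map_sub_le_of_fderiv (x := x) (y := a • x) (K := K)
    (fun z _ ↦ hV z) fun z hz ↦ inner_apply_self_le_neg_mul_sq_norm
      (fun h hh ↦ hdiss h z hh (hax ▸ mul_norm_le_norm_of_mem_segment_smul ha₀ ha₁.le hz)) _
  rw [hsub, real_inner_smul_left, norm_smul, Real.norm_of_nonneg (by linarith)] at hmono
  have hVy : ⟪x, V (a • x)⟫ ≤ M * ‖x‖ := by
    have hy : a • x ∈ Metric.sphere (0 : E) R₀ := by
      rw [mem_sphere_zero_iff_norm, norm_smul, Real.norm_of_nonneg ha₀, hax]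
    calc ⟪x, V (a • x)⟫ ≤ ‖x‖ * ‖V (a • x)‖ := real_inner_le_norm _ _
      _ ≤ ‖x‖ * M := by gcongr; exact hM _ hy
      _ = M * ‖x‖ := mul_comm _ _
  have hdiv : ⟪x, V x - V (a • x)⟫ ≤ -K * ((1 - a) * ‖x‖ ^ 2) := by
    have h1a : 0 < 1 - a := by linarith
    refine le_of_mul_le_mul_left ?_ h1a
    linarith [show (1 - a) * (-K * ((1 - a) * ‖x‖ ^ 2)) = -K * ((1 - a) * ‖x‖) ^ 2 by ring]
  have hlin : (1 - a) * ‖x‖ ^ 2 = ‖x‖ * (‖x‖ - R₀) := by rw [← hax]; ring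
  rw [inner_sub_right, hlin] at hdiv
  linarith

end Dissipativity

theorem lemma_2_2_c_general (d : ℕ)
    (V : EuclideanSpace ℝ (Fin d) → EuclideanSpace ℝ (Fin d))
    (hV : ContDiff ℝ 1 V)
    (K_V R₀ : ℝ) (hKV : 0 < K_V) (hR₀ : 0 < R₀)
    (hdiss : ∀ (h x : EuclideanSpace ℝ (Fin d)), ‖h‖ = 1 → R₀ ≤ ‖x‖ →
      ⟪h, fderiv ℝ V x h⟫ ≤ -K_V) :
    ∃ η R₁ : ℝ, 0 < η ∧ 0 < R₁ ∧ ∀ x : EuclideanSpace ℝ (Fin d),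
      R₁ ≤ ‖x‖ → ⟪x, V x⟫ ≤ -η * ‖x‖ ^ 2 := by
  obtain ⟨M, hM⟩ :=
    (isCompact_sphere (0 : EuclideanSpace ℝ (Fin d)) R₀).exists_bound_of_continuousOn
      hV.continuous.continuousOn
  refine ⟨K_V / 2, max (R₀ + 1) (2 * (M + K_V * R₀) / K_V), by positivity,
    lt_max_of_lt_left (by linarith), fun x hx ↦ ?_⟩
  have hxR₀ : R₀ < ‖x‖ := by linarith [le_max_left (R₀ + 1) (2 * (M + K_V * R₀) / K_V)]
  have hxM : 2 * (M + K_V * R₀) ≤ K_V * ‖x‖ := by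
    rw [← div_le_iff₀' hKV]; exact (le_max_right _ _).trans hx
  have hbound :=
    inner_map_le_of_fderiv_inner_le (hV.differentiable one_ne_zero) hR₀.le hdiss hM hxR₀
  nlinarith [hR₀.trans hxR₀]

/-- Lemma 2.2(c): dissipativity of `V` at infinity. -/
theorem lemma_2_2_c (d : ℕ) (hd : 1 ≤ d)
    (V : EuclideanSpace ℝ (Fin d) → EuclideanSpace ℝ (Fin d))
    (hV : ContDiff ℝ 1 V)
    (K_V R₀ : ℝ) (hKV : 0 < K_V) (hR₀ : 0 < R₀)
    (hdiss : ∀ (h x : EuclideanSpace ℝ (Fin d)), ‖h‖ = 1 → R₀ ≤ ‖x‖ →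
      ⟪h, fderiv ℝ V x h⟫ ≤ -K_V) :
    ∃ η R₁ : ℝ, 0 < η ∧ 0 < R₁ ∧ ∀ x : EuclideanSpace ℝ (Fin d),
      R₁ ≤ ‖x‖ → ⟪x, V x⟫ ≤ -η * ‖x‖ ^ 2 :=
  lemma_2_2_c_general d V hV K_V R₀ hKV hR₀ hdiss
end

section
/- For all x, y, z ∈ ℝ^d one has ‖Φ(x − y) − Φ(x − z)‖ ≤ K_1 ‖y − z‖ (1 + ‖x‖^r) (1 + ‖y‖^r + ‖z‖^r), where K_1 = max(K, 2^{r+1}). -/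
/-!
Apply the growth condition to the pair `x - y`, `x - z`, whose difference is `z - y`, and bound
`‖x - y‖ ^ r ≤ 2 ^ r (‖x‖ ^ r + ‖y‖ ^ r)` (likewise for `z`). What remains is the elementary
inequality `K + 2 ^ r (2X + Y + Z) ≤ K₁ (1 + X) (1 + Y + Z)` for `X, Y, Z ≥ 0`.
-/

lemma norm_sub_pow_le_two_pow_mul {E : Type*} [SeminormedAddCommGroup E] (x y : E) (r : ℕ) :
    ‖x - y‖ ^ r ≤ 2 ^ r * (‖x‖ ^ r + ‖y‖ ^ r) :=
  calc ‖x - y‖ ^ r ≤ (‖x‖ + ‖y‖) ^ r := by gcongr; exact norm_sub_le x y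
    _ ≤ 2 ^ (r - 1) * (‖x‖ ^ r + ‖y‖ ^ r) := add_pow_le (norm_nonneg x) (norm_nonneg y) r
    _ ≤ 2 ^ r * (‖x‖ ^ r + ‖y‖ ^ r) := by gcongr <;> norm_num

lemma add_two_pow_mul_le_mul_one_add {K K₁ X Y Z : ℝ} {r : ℕ} (hK : K ≤ K₁)
    (h2 : 2 ^ (r + 1) ≤ K₁) (hX : 0 ≤ X) (hY : 0 ≤ Y) (hZ : 0 ≤ Z) :
    K + 2 ^ r * (X + Y) + 2 ^ r * (X + Z) ≤ K₁ * (1 + X) * (1 + Y + Z) := by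
  have hK₁ : 0 ≤ K₁ := le_trans (by positivity) h2
  have h2r : (2 : ℝ) ^ r ≤ K₁ := le_trans (pow_le_pow_right₀ one_le_two r.le_succ) h2
  rw [pow_succ] at h2
  nlinarith [mul_nonneg (mul_nonneg hK₁ hX) (add_nonneg hY hZ), mul_le_mul_of_nonneg_right h2 hX,
    mul_le_mul_of_nonneg_right h2r (add_nonneg hY hZ)]

theorem norm_map_sub_sub_map_sub_le {E F : Type*} [SeminormedAddCommGroup E]
    [SeminormedAddCommGroup F] {Φ : E → F} {K : ℝ} {r : ℕ}
    (hΦ : ∀ x y, ‖Φ x - Φ y‖ ≤ ‖x - y‖ * (K + ‖x‖ ^ r + ‖y‖ ^ r)) (x y z : E) :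
    ‖Φ (x - y) - Φ (x - z)‖ ≤
      max K (2 ^ (r + 1)) * ‖y - z‖ * (1 + ‖x‖ ^ r) * (1 + ‖y‖ ^ r + ‖z‖ ^ r) := by
  have hyz : ‖(x - y) - (x - z)‖ = ‖y - z‖ := by
    rw [sub_sub_sub_cancel_left, norm_sub_rev]
  have hgrowth : K + ‖x - y‖ ^ r + ‖x - z‖ ^ r ≤
      max K (2 ^ (r + 1)) * (1 + ‖x‖ ^ r) * (1 + ‖y‖ ^ r + ‖z‖ ^ r) := by
    grw [norm_sub_pow_le_two_pow_mul x y, norm_sub_pow_le_two_pow_mul x z]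
    exact add_two_pow_mul_le_mul_one_add (le_max_left _ _) (le_max_right _ _)
      (by positivity) (by positivity) (by positivity)
  calc ‖Φ (x - y) - Φ (x - z)‖ ≤ ‖y - z‖ * (K + ‖x - y‖ ^ r + ‖x - z‖ ^ r) := hyz ▸ hΦ _ _
    _ ≤ ‖y - z‖ * (max K (2 ^ (r + 1)) * (1 + ‖x‖ ^ r) * (1 + ‖y‖ ^ r + ‖z‖ ^ r)) := by
        gcongr
    _ = _ := by ring

theorem lemma_2_3_c_general (d : ℕ) (K : ℝ) (r : ℕ)
    (Φ : EuclideanSpace ℝ (Fin d) → EuclideanSpace ℝ (Fin d))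
    (hΦ : ∀ x y : EuclideanSpace ℝ (Fin d),
      ‖Φ x - Φ y‖ ≤ ‖x - y‖ * (K + ‖x‖ ^ r + ‖y‖ ^ r)) :
    ∀ x y z : EuclideanSpace ℝ (Fin d),
      ‖Φ (x - y) - Φ (x - z)‖ ≤
        max K (2 ^ (r + 1)) * ‖y - z‖ * (1 + ‖x‖ ^ r) * (1 + ‖y‖ ^ r + ‖z‖ ^ r) :=
  norm_map_sub_sub_map_sub_le hΦ

/-- Lemma 2.3(c): Lipschitz-type bound in the second argument of the difference. -/
theorem lemma_2_3_c (d : ℕ) (hd : 1 ≤ d) (K : ℝ) (hK : 0 < K) (r : ℕ)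
    (Φ : EuclideanSpace ℝ (Fin d) → EuclideanSpace ℝ (Fin d))
    (hΦ0 : Φ 0 = 0)
    (hodd : ∀ x : EuclideanSpace ℝ (Fin d), Φ (-x) = -Φ x)
    (hΦ : ∀ x y : EuclideanSpace ℝ (Fin d),
      ‖Φ x - Φ y‖ ≤ ‖x - y‖ * (K + ‖x‖ ^ r + ‖y‖ ^ r)) :
    ∀ x y z : EuclideanSpace ℝ (Fin d),
      ‖Φ (x - y) - Φ (x - z)‖ ≤
        max K (2 ^ (r + 1)) * ‖y - z‖ * (1 + ‖x‖ ^ r) * (1 + ‖y‖ ^ r + ‖z‖ ^ r) :=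
  lemma_2_3_c_general d K r Φ hΦ
end

section
/- For all x, y ∈ ℝ^d and every n ∈ ℕ one has ⟨x ‖x‖^n − y ‖y‖^n, Φ(x − y)⟩ ≥ 0. -/
/-!
`Φ(z)` is a nonnegative multiple of `z`, so it suffices that `x ↦ ‖x‖ⁿ x` is a monotone operator:
by Cauchy–Schwarz, `⟨‖x‖ⁿ x − ‖y‖ⁿ y, x − y⟩ ≥ (‖x‖ − ‖y‖)(‖x‖ⁿ⁺¹ − ‖y‖ⁿ⁺¹) ≥ 0`.
-/

open scoped RealInnerProductSpace

lemma sub_mul_pow_sub_pow_nonneg {R : Type*} [CommRing R] [LinearOrder R] [IsStrictOrderedRing R]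
    {a b : R} (ha : 0 ≤ a) (hb : 0 ≤ b) (n : ℕ) : 0 ≤ (a - b) * (a ^ n - b ^ n) := by
  rcases le_total a b with h | h
  · exact mul_nonneg_of_nonpos_of_nonpos (sub_nonpos.2 h) (sub_nonpos.2 (pow_le_pow_left₀ ha h n))
  · exact mul_nonneg (sub_nonneg.2 h) (sub_nonneg.2 (pow_le_pow_left₀ hb h n))

section InnerProductSpace

variable {E : Type*} [NormedAddCommGroup E] [InnerProductSpace ℝ E]

lemma real_inner_norm_pow_smul_sub_eq (x y : E) (n : ℕ) :
    ⟪‖x‖ ^ n • x - ‖y‖ ^ n • y, x - y⟫ =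
      ‖x‖ ^ (n + 2) + ‖y‖ ^ (n + 2) - (‖x‖ ^ n + ‖y‖ ^ n) * ⟪x, y⟫ := by
  simp only [inner_sub_left, inner_sub_right, real_inner_smul_left, real_inner_self_eq_norm_sq,
    real_inner_comm y x]
  ring

theorem real_inner_norm_pow_smul_sub_nonneg (x y : E) (n : ℕ) :
    0 ≤ ⟪‖x‖ ^ n • x - ‖y‖ ^ n • y, x - y⟫ := by
  calc 0 ≤ (‖x‖ - ‖y‖) * (‖x‖ ^ (n + 1) - ‖y‖ ^ (n + 1)) :=
        sub_mul_pow_sub_pow_nonneg (norm_nonneg x) (norm_nonneg y) (n + 1)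
    _ = ‖x‖ ^ (n + 2) + ‖y‖ ^ (n + 2) - (‖x‖ ^ n + ‖y‖ ^ n) * (‖x‖ * ‖y‖) := by ring
    _ ≤ ‖x‖ ^ (n + 2) + ‖y‖ ^ (n + 2) - (‖x‖ ^ n + ‖y‖ ^ n) * ⟪x, y⟫ := by
        gcongr
        exact real_inner_le_norm x y
    _ = ⟪‖x‖ ^ n • x - ‖y‖ ^ n • y, x - y⟫ := (real_inner_norm_pow_smul_sub_eq x y n).symm

lemma exists_nonneg_smul_eq_of_radial {φ : ℝ → ℝ} (hφnonneg : ∀ u : ℝ, 0 ≤ u → 0 ≤ φ u)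
    {Φ : E → E} (hΦ0 : Φ 0 = 0) (hΦ : ∀ x : E, x ≠ 0 → Φ x = (φ ‖x‖ / ‖x‖) • x) (z : E) :
    ∃ c : ℝ, 0 ≤ c ∧ Φ z = c • z := by
  rcases eq_or_ne z 0 with rfl | hz
  · exact ⟨0, le_rfl, by rw [hΦ0, smul_zero]⟩
  · exact ⟨_, div_nonneg (hφnonneg _ (norm_nonneg z)) (norm_nonneg z), hΦ z hz⟩

end InnerProductSpace

theorem lemma_2_3_d_general (d : ℕ)
    (φ : ℝ → ℝ)
    (hφnonneg : ∀ u : ℝ, 0 ≤ u → 0 ≤ φ u)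
    (Φ : EuclideanSpace ℝ (Fin d) → EuclideanSpace ℝ (Fin d))
    (hΦ0 : Φ 0 = 0)
    (hΦ : ∀ x : EuclideanSpace ℝ (Fin d), x ≠ 0 → Φ x = (φ ‖x‖ / ‖x‖) • x) :
    ∀ (x y : EuclideanSpace ℝ (Fin d)) (n : ℕ),
      0 ≤ ⟪‖x‖ ^ n • x - ‖y‖ ^ n • y, Φ (x - y)⟫ := by
  intro x y n
  obtain ⟨c, hc, hΦxy⟩ := exists_nonneg_smul_eq_of_radial hφnonneg hΦ0 hΦ (x - y)
  rw [hΦxy, real_inner_smul_right]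
  exact mul_nonneg hc (real_inner_norm_pow_smul_sub_nonneg x y n)

/-- Lemma 2.3(d): for a rotationally invariant interaction function `Φ`,
`⟨x‖x‖ⁿ − y‖y‖ⁿ, Φ(x−y)⟩ ≥ 0`. -/
theorem lemma_2_3_d (d : ℕ) (hd : 1 ≤ d)
    (φ : ℝ → ℝ) (hφmono : MonotoneOn φ (Set.Ici 0))
    (hφnonneg : ∀ u : ℝ, 0 ≤ u → 0 ≤ φ u) (hφ0 : φ 0 = 0)
    (Φ : EuclideanSpace ℝ (Fin d) → EuclideanSpace ℝ (Fin d))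
    (hΦ0 : Φ 0 = 0)
    (hΦ : ∀ x : EuclideanSpace ℝ (Fin d), x ≠ 0 → Φ x = (φ ‖x‖ / ‖x‖) • x) :
    ∀ (x y : EuclideanSpace ℝ (Fin d)) (n : ℕ),
      0 ≤ ⟪‖x‖ ^ n • x - ‖y‖ ^ n • y, Φ (x - y)⟫ :=
  lemma_2_3_d_general d φ hφnonneg Φ hΦ0 hΦ
end

section
/- For all x, y ∈ ℝ^d one has ⟨x − y, b(x) − b(y)⟩ ≥ 0; that is, the averaged interaction drift b is monotone. -/
/-!
Write `Φ x = g ‖x‖ • x` with `g t = φ t / t ≥ 0`. Cauchy–Schwarz gives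
`⟪a - c, Φ a - Φ c⟫ ≥ (‖a‖ - ‖c‖) (φ ‖a‖ - φ ‖c‖)`, which is nonnegative because `φ` is monotone.
Hence `Φ` is a monotone map, and integrating the pointwise inequality shows that so is the average
`x ↦ ∫ Φ (x - y) dμ(y)` of its translates. The growth bound on `Φ` together with the moment of `μ`
makes these integrals finite, so that the integral is linear in the integrand.
-/

open MeasureTheory Set Filter Topology
open scoped RealInnerProductSpace

section MonotoneMap

variable {E : Type*} [NormedAddCommGroup E] [InnerProductSpace ℝ E]

def IsMonotoneMap (F : E → E) : Prop :=
  ∀ x y, 0 ≤ ⟪x - y, F x - F y⟫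

theorem isMonotoneMap_smul_norm {g : ℝ → ℝ} (hg : ∀ t, 0 ≤ t → 0 ≤ g t)
    (hgt : MonotoneOn (fun t => g t * t) (Ici 0)) :
    IsMonotoneMap (fun x : E => g ‖x‖ • x) := by
  intro a c
  have hexpand : ⟪a - c, g ‖a‖ • a - g ‖c‖ • c⟫
      = g ‖a‖ * ‖a‖ ^ 2 + g ‖c‖ * ‖c‖ ^ 2 - (g ‖a‖ + g ‖c‖) * ⟪a, c⟫ := by
    simp only [inner_sub_left, inner_sub_right, real_inner_smul_right,
      real_inner_self_eq_norm_sq, real_inner_comm c a]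
    ring
  have hcs : (g ‖a‖ + g ‖c‖) * ⟪a, c⟫ ≤ (g ‖a‖ + g ‖c‖) * (‖a‖ * ‖c‖) :=
    mul_le_mul_of_nonneg_left (real_inner_le_norm a c)
      (add_nonneg (hg _ (norm_nonneg a)) (hg _ (norm_nonneg c)))
  have hmonovary := (hgt.monovaryOn monotoneOn_id).sub_mul_sub_nonneg
    (mem_Ici.2 (norm_nonneg a)) (mem_Ici.2 (norm_nonneg c))
  simp only [id] at hmonovary
  rw [hexpand]
  nlinarith

variable [CompleteSpace E] [MeasurableSpace E]

theorem IsMonotoneMap.integral_comp_sub {F : E → E} (hF : IsMonotoneMap F)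
    {μ : Measure E} (hint : ∀ x, Integrable (fun y => F (x - y)) μ) :
    IsMonotoneMap (fun x => ∫ y, F (x - y) ∂μ) := by
  intro x x'
  have hint_sub : Integrable (fun y => F (x - y) - F (x' - y)) μ := (hint x).sub (hint x')
  rw [← integral_sub (hint x) (hint x'), ← integral_inner hint_sub]
  refine integral_nonneg fun y => ?_
  simpa using hF (x - y) (x' - y)

end MonotoneMap

section PolynomialGrowth

variable {E G : Type*} [NormedAddCommGroup E] [NormedAddCommGroup G]
  {F : E → G} {K : ℝ} {r : ℕ}

theorem continuous_of_norm_sub_le_mul_add_pow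
    (hF : ∀ x y, ‖F x - F y‖ ≤ ‖x - y‖ * (K + ‖x‖ ^ r + ‖y‖ ^ r)) : Continuous F := by
  refine continuous_iff_continuousAt.2 fun x => tendsto_iff_norm_sub_tendsto_zero.2 ?_
  have hbound : Tendsto (fun y => ‖y - x‖ * (K + ‖y‖ ^ r + ‖x‖ ^ r)) (𝓝 x) (𝓝 0) := by
    simpa using (by fun_prop : Continuous fun y => ‖y - x‖ * (K + ‖y‖ ^ r + ‖x‖ ^ r)).tendsto x
  exact squeeze_zero (fun _ => norm_nonneg _) (fun y => hF y x) hbound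

theorem norm_le_of_norm_sub_le_mul_add_pow
    (hF : ∀ x y, ‖F x - F y‖ ≤ ‖x - y‖ * (K + ‖x‖ ^ r + ‖y‖ ^ r)) (z : E) :
    ‖F z‖ ≤ ‖F 0‖ + (K + ‖(0 : E)‖ ^ r) * ‖z‖ + ‖z‖ ^ (r + 1) := by
  calc ‖F z‖ ≤ ‖F 0‖ + ‖F z - F 0‖ := norm_le_insert' _ _
    _ ≤ ‖F 0‖ + ‖z - 0‖ * (K + ‖z‖ ^ r + ‖(0 : E)‖ ^ r) := by gcongr; exact hF z 0
    _ = ‖F 0‖ + (K + ‖(0 : E)‖ ^ r) * ‖z‖ + ‖z‖ ^ (r + 1) := by rw [sub_zero]; ring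

variable [MeasurableSpace E] [OpensMeasurableSpace E] [SecondCountableTopology E]
  {μ : Measure E} [IsFiniteMeasure μ]

theorem integrable_norm_sub_pow_of_le {k n : ℕ} (hkn : k ≤ n)
    (hmom : Integrable (fun y => ‖y‖ ^ n) μ) (x : E) :
    Integrable (fun y => ‖x - y‖ ^ k) μ := by
  rcases n.eq_zero_or_pos with rfl | hn
  · simp [Nat.le_zero.1 hkn]
  have hid : MemLp id n μ := by
    rw [← integrable_norm_rpow_iff measurable_id.aestronglyMeasurable (by simpa using hn.ne')
      (by simp)]
    simpa using hmom
  exact integrable_norm_pow_of_le (by fun_prop) hkn ((memLp_const x).sub hid).integrable_norm_pow'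

theorem integrable_comp_sub_of_norm_sub_le_mul_add_pow
    (hF : ∀ x y, ‖F x - F y‖ ≤ ‖x - y‖ * (K + ‖x‖ ^ r + ‖y‖ ^ r))
    (hmom : Integrable (fun y => ‖y‖ ^ (r + 1)) μ) (x : E) :
    Integrable (fun y => F (x - y)) μ := by
  have hdom : Integrable
      (fun y => ‖F 0‖ + (K + ‖(0 : E)‖ ^ r) * ‖x - y‖ ^ 1 + ‖x - y‖ ^ (r + 1)) μ :=
    ((integrable_const _).add ((integrable_norm_sub_pow_of_le (by omega) hmom x).const_mul _)).add
      (integrable_norm_sub_pow_of_le le_rfl hmom x)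
  refine hdom.mono' ((continuous_of_norm_sub_le_mul_add_pow hF).comp
    (continuous_sub_left x)).aestronglyMeasurable (ae_of_all _ fun y => ?_)
  simpa using norm_le_of_norm_sub_le_mul_add_pow hF (x - y)

end PolynomialGrowth

theorem lemma_2_4_b_general (d : ℕ) (K : ℝ) (r : ℕ)
    (φ : ℝ → ℝ) (hφmono : MonotoneOn φ (Set.Ici 0))
    (hφ0 : φ 0 = 0)
    (Φ : EuclideanSpace ℝ (Fin d) → EuclideanSpace ℝ (Fin d))
    (hΦ0 : Φ 0 = 0)
    (hΦrot : ∀ x : EuclideanSpace ℝ (Fin d), x ≠ 0 → Φ x = (φ ‖x‖ / ‖x‖) • x)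
    (hΦ : ∀ x y : EuclideanSpace ℝ (Fin d),
      ‖Φ x - Φ y‖ ≤ ‖x - y‖ * (K + ‖x‖ ^ r + ‖y‖ ^ r))
    (μ : Measure (EuclideanSpace ℝ (Fin d))) [IsProbabilityMeasure μ]
    (hmom : Integrable (fun y : EuclideanSpace ℝ (Fin d) => ‖y‖ ^ (r + 1)) μ)
    (b : EuclideanSpace ℝ (Fin d) → EuclideanSpace ℝ (Fin d))
    (hb : ∀ x, b x = ∫ y, Φ (x - y) ∂μ) :
    ∀ x y : EuclideanSpace ℝ (Fin d), 0 ≤ ⟪x - y, b x - b y⟫ := by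
  have hΦradial : Φ = fun x => (φ ‖x‖ / ‖x‖) • x := by
    funext x
    rcases eq_or_ne x 0 with rfl | hx
    · simp [hΦ0]
    · exact hΦrot x hx
  have hΦmono : IsMonotoneMap Φ := by
    rw [hΦradial]
    refine isMonotoneMap_smul_norm (g := fun t => φ t / t) (fun t ht => ?_) ?_
    · have hφt : φ 0 ≤ φ t := hφmono self_mem_Ici ht ht
      exact div_nonneg (hφ0 ▸ hφt) ht
    · refine hφmono.congr fun t _ => (div_mul_cancel_of_imp fun ht => ?_).symm
      rw [ht, hφ0]
  rw [funext hb]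
  exact hΦmono.integral_comp_sub (integrable_comp_sub_of_norm_sub_le_mul_add_pow hΦ hmom)

/-- Lemma 2.4(b): the averaged interaction drift `b(x) = ∫ Φ(x − y) dμ(y)` is monotone. -/
theorem lemma_2_4_b (d : ℕ) (hd : 1 ≤ d) (K : ℝ) (hK : 0 < K) (r : ℕ)
    (φ : ℝ → ℝ) (hφmono : MonotoneOn φ (Set.Ici 0))
    (hφnonneg : ∀ u : ℝ, 0 ≤ u → 0 ≤ φ u) (hφ0 : φ 0 = 0)
    (Φ : EuclideanSpace ℝ (Fin d) → EuclideanSpace ℝ (Fin d))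
    (hΦ0 : Φ 0 = 0)
    (hΦrot : ∀ x : EuclideanSpace ℝ (Fin d), x ≠ 0 → Φ x = (φ ‖x‖ / ‖x‖) • x)
    (hΦ : ∀ x y : EuclideanSpace ℝ (Fin d),
      ‖Φ x - Φ y‖ ≤ ‖x - y‖ * (K + ‖x‖ ^ r + ‖y‖ ^ r))
    (μ : Measure (EuclideanSpace ℝ (Fin d))) [IsProbabilityMeasure μ]
    (hmom : Integrable (fun y : EuclideanSpace ℝ (Fin d) => ‖y‖ ^ (r + 1)) μ)
    (b : EuclideanSpace ℝ (Fin d) → EuclideanSpace ℝ (Fin d))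
    (hb : ∀ x, b x = ∫ y, Φ (x - y) ∂μ) :
    ∀ x y : EuclideanSpace ℝ (Fin d), 0 ≤ ⟪x - y, b x - b y⟫ :=
  lemma_2_4_b_general d K r φ hφmono hφ0 Φ hΦ0 hΦrot hΦ μ hmom b hb
end

section
/- For every t ∈ [0, T] one has ‖Y_t − Z_t‖ ≤ e^{K T} Δ ∫_0^t (1 + ‖Z_s‖^{2q}) ds, where Δ = sup_{t ∈ [0,T]} sup_{x ∈ ℝ^d} ‖b¹(t,x) − b²(t,x)‖ / (1 + ‖x‖^{2q}). -/
/-!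
The difference `e = Y - Z` does not see the noise: `e 0 = 0` and
`e' = (V Y - V Z) - (b¹ Y - b¹ Z) - (b¹ Z - b² Z)`. The one-sided Lipschitz bound on `V` and the
monotonicity of `b¹` give `⟪e, e'⟫ ≤ K ‖e‖² + ‖e‖ Δ (1 + ‖Z‖^{2q})`, i.e. formally
`‖e‖' ≤ K ‖e‖ + Δ (1 + ‖Z‖^{2q})`, and Gronwall's inequality concludes. As `‖e‖` need not be
differentiable where `e` vanishes, Gronwall is applied to `√(‖e‖² + ε²)` and then `ε → 0`.
-/

open scoped RealInnerProductSpace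
open Set Real

theorem continuousOn_drift {E : Type*} [TopologicalSpace E] [Sub E] [ContinuousSub E]
    {V : E → E} {b : ℝ → E → E} {X : ℝ → E} {s : Set ℝ}
    (hV : Continuous V) (hb : ContinuousOn (fun p : ℝ × E => b p.1 p.2) (s ×ˢ univ))
    (hX : ContinuousOn X s) : ContinuousOn (fun t => V (X t) - b t (X t)) s :=
  (hV.comp_continuousOn hX).sub <|
    hb.comp (continuousOn_id.prodMk hX) fun _ ht => mk_mem_prod ht (mem_univ _)

section NormedSpace

variable {E : Type*} [NormedAddCommGroup E] [NormedSpace ℝ E]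

theorem hasDerivAt_integral_of_continuousOn [CompleteSpace E] {g : ℝ → E} {a b s : ℝ}
    (hg : ContinuousOn g (Icc a b)) (hs : s ∈ Ioo a b) :
    HasDerivAt (fun t => ∫ x in a..t, g x) (g s) s :=
  intervalIntegral.integral_hasDerivAt_right
    ((hg.mono (Icc_subset_Icc le_rfl hs.2.le)).intervalIntegrable_of_Icc hs.1.le)
    ((hg.mono Ioo_subset_Icc_self).stronglyMeasurableAtFilter isOpen_Ioo s hs)
    (hg.continuousAt (Icc_mem_nhds hs.1 hs.2))

theorem hasDerivAt_sub_of_eq_integral_add [CompleteSpace E] {X Y F G w : ℝ → E} {a b : ℝ}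
    (hF : ContinuousOn F (Icc a b)) (hG : ContinuousOn G (Icc a b))
    (hX : ∀ t ∈ Icc a b, X t = X a + (∫ s in a..t, F s) + w t)
    (hY : ∀ t ∈ Icc a b, Y t = Y a + (∫ s in a..t, G s) + w t) :
    ∀ s ∈ Ioo a b, HasDerivAt (fun t => X t - Y t) (F s - G s) s := by
  intro s hs
  have hdiff : ∀ t ∈ Icc a b, X t - Y t = X a - Y a + ∫ u in a..t, (F u - G u) := by
    intro t ht
    have hsub : Icc a t ⊆ Icc a b := Icc_subset_Icc le_rfl ht.2
    rw [intervalIntegral.integral_sub ((hF.mono hsub).intervalIntegrable_of_Icc ht.1)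
      ((hG.mono hsub).intervalIntegrable_of_Icc ht.1), hX t ht, hY t ht]
    abel
  exact ((hasDerivAt_integral_of_continuousOn (hF.sub hG) hs).const_add _).congr_of_eventuallyEq
    (Filter.eventually_of_mem (Icc_mem_nhds hs.1 hs.2) hdiff)

end NormedSpace

theorem le_exp_mul_add_integral_of_hasDerivAt_le {u u' H : ℝ → ℝ} {a b K : ℝ} (hK : 0 ≤ K)
    (hu : ContinuousOn u (Icc a b)) (hu' : ∀ s ∈ Ioo a b, HasDerivAt u (u' s) s)
    (hH : ContinuousOn H (Icc a b)) (hH₀ : ∀ s ∈ Icc a b, 0 ≤ H s)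
    (hbound : ∀ s ∈ Ioo a b, u' s ≤ K * u s + H s) :
    ∀ t ∈ Icc a b, u t ≤ exp (K * (t - a)) * (u a + ∫ s in a..t, H s) := by
  intro t ht
  have hab : a ≤ b := ht.1.trans ht.2
  -- `G` is nondecreasing because `e^{-K(s-a)} H ≤ H`
  set G : ℝ → ℝ := fun s => (∫ x in a..s, H x) - exp (-(K * (s - a))) * u s
  have hGc : ContinuousOn G (Icc a b) := by
    refine ContinuousOn.sub ?_ ((by fun_prop : Continuous fun s => exp (-(K * (s - a))))
      |>.continuousOn.mul hu)
    rw [← uIcc_of_le hab]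
    exact intervalIntegral.continuousOn_primitive_interval'
      (hH.intervalIntegrable_of_Icc hab) left_mem_uIcc
  have hG' : ∀ s ∈ Ioo a b,
      HasDerivAt G (H s - (-K * exp (-(K * (s - a))) * u s + exp (-(K * (s - a))) * u' s)) s := by
    intro s hs
    have hexp : HasDerivAt (fun s => exp (-(K * (s - a)))) (-K * exp (-(K * (s - a)))) s := by
      simpa [mul_comm] using (((hasDerivAt_id s).sub_const a).const_mul K).neg.exp
    exact (hasDerivAt_integral_of_continuousOn hH hs).sub (hexp.mul (hu' s hs))
  have hG'₀ : ∀ s ∈ Ioo a b,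
      0 ≤ H s - (-K * exp (-(K * (s - a))) * u s + exp (-(K * (s - a))) * u' s) := by
    intro s hs
    have hexp : exp (-(K * (s - a))) ≤ 1 := exp_le_one_iff.2 (by nlinarith [hs.1])
    nlinarith [hbound s hs, hH₀ s (Ioo_subset_Icc_self hs), exp_pos (-(K * (s - a)))]
  have hGt : G a ≤ G t := monotoneOn_of_hasDerivWithinAt_nonneg (convex_Icc a b) hGc
    (by simpa using fun s hs => (hG' s hs).hasDerivWithinAt)
    (by simpa using hG'₀) (left_mem_Icc.2 hab) ht ht.1
  have : exp (-(K * (t - a))) * u t ≤ u a + ∫ s in a..t, H s := by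
    simp only [G, intervalIntegral.integral_same, sub_self, mul_zero, neg_zero, exp_zero] at hGt
    linarith
  calc u t = exp (K * (t - a)) * (exp (-(K * (t - a))) * u t) := by
        rw [← mul_assoc, ← exp_add, add_neg_cancel, exp_zero, one_mul]
    _ ≤ exp (K * (t - a)) * (u a + ∫ s in a..t, H s) := by gcongr

section InnerProductSpace

variable {E : Type*} [NormedAddCommGroup E] [InnerProductSpace ℝ E]

theorem norm_le_exp_mul_add_integral_of_inner_hasDerivAt_le {f f' : ℝ → E} {H : ℝ → ℝ}
    {a b K : ℝ} (hK : 0 ≤ K) (hf : ContinuousOn f (Icc a b))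
    (hf' : ∀ s ∈ Ioo a b, HasDerivAt f (f' s) s)
    (hH : ContinuousOn H (Icc a b)) (hH₀ : ∀ s ∈ Icc a b, 0 ≤ H s)
    (hbound : ∀ s ∈ Ioo a b, ⟪f s, f' s⟫ ≤ K * ‖f s‖ ^ 2 + ‖f s‖ * H s) :
    ∀ t ∈ Icc a b, ‖f t‖ ≤ exp (K * (t - a)) * (‖f a‖ + ∫ s in a..t, H s) := by
  intro t ht
  have key : ∀ ε > 0, ‖f t‖ ≤ exp (K * (t - a)) * (‖f a‖ + ε + ∫ s in a..t, H s) := by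
    intro ε hε
    set φ : ℝ → ℝ := fun s => √(‖f s‖ ^ 2 + ε ^ 2)
    have hφ₀ : ∀ s, 0 < φ s := fun s => sqrt_pos.2 (by positivity)
    have hfφ : ∀ s, ‖f s‖ ≤ φ s := fun s => le_sqrt_of_sq_le (by nlinarith)
    have hφ' : ∀ s ∈ Ioo a b, HasDerivAt φ (⟪f s, f' s⟫ / φ s) s := by
      intro s hs
      have hsq : HasDerivAt (fun s => ‖f s‖ ^ 2 + ε ^ 2) (2 * ⟪f s, f' s⟫) s := by
        simpa using ((hf' s hs).norm_sq).add_const (ε ^ 2)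
      convert hsq.sqrt (by positivity) using 1
      have := hφ₀ s
      simp only [φ] at this ⊢
      field_simp
    have hφa : φ a ≤ ‖f a‖ + ε :=
      (sqrt_le_left (by positivity)).2 (by nlinarith [norm_nonneg (f a)])
    calc ‖f t‖ ≤ φ t := hfφ t
      _ ≤ exp (K * (t - a)) * (φ a + ∫ s in a..t, H s) := by
        refine le_exp_mul_add_integral_of_hasDerivAt_le hK (by fun_prop) hφ' hH hH₀ ?_ t ht
        intro s hs
        rw [div_le_iff₀ (hφ₀ s)]
        have h₁ := mul_le_mul_of_nonneg_left (pow_le_pow_left₀ (norm_nonneg _) (hfφ s) 2) hK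
        have h₂ := mul_le_mul_of_nonneg_right (hfφ s) (hH₀ s (Ioo_subset_Icc_self hs))
        linarith [hbound s hs]
      _ ≤ exp (K * (t - a)) * (‖f a‖ + ε + ∫ s in a..t, H s) := by gcongr
  refine le_of_forall_pos_le_add fun δ hδ => ?_
  calc ‖f t‖ ≤ exp (K * (t - a)) * (‖f a‖ + δ / exp (K * (t - a)) + ∫ s in a..t, H s) :=
        key _ (by positivity)
    _ = exp (K * (t - a)) * (‖f a‖ + ∫ s in a..t, H s) + δ := by
        field_simp; ring

theorem inner_sub_drift_sub_le {V b₁ b₂ : E → E} {K : ℝ} {x y : E}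
    (hV : ⟪x - y, V x - V y⟫ ≤ K * ‖x - y‖ ^ 2) (hb₁ : 0 ≤ ⟪x - y, b₁ x - b₁ y⟫) :
    ⟪x - y, (V x - b₁ x) - (V y - b₂ y)⟫ ≤ K * ‖x - y‖ ^ 2 + ‖x - y‖ * ‖b₁ y - b₂ y‖ := by
  have hsplit : (V x - b₁ x) - (V y - b₂ y) = (V x - V y) - (b₁ x - b₁ y) - (b₁ y - b₂ y) := by
    abel
  rw [hsplit, inner_sub_right, inner_sub_right]
  linarith [neg_le_of_abs_le (abs_real_inner_le_norm (x - y) (b₁ y - b₂ y))]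

end InnerProductSpace

theorem lemma_2_7_general (d : ℕ) (T : ℝ) (q : ℕ) (K : ℝ) (hK : 0 < K)
    (V : EuclideanSpace ℝ (Fin d) → EuclideanSpace ℝ (Fin d)) (hVc : Continuous V)
    (hV : ∀ x y : EuclideanSpace ℝ (Fin d), ⟪x - y, V x - V y⟫ ≤ K * ‖x - y‖ ^ 2)
    (b₁ b₂ : ℝ → EuclideanSpace ℝ (Fin d) → EuclideanSpace ℝ (Fin d))
    (hb₁c : ContinuousOn (fun p : ℝ × EuclideanSpace ℝ (Fin d) => b₁ p.1 p.2)
      (Set.Icc 0 T ×ˢ Set.univ))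
    (hb₂c : ContinuousOn (fun p : ℝ × EuclideanSpace ℝ (Fin d) => b₂ p.1 p.2)
      (Set.Icc 0 T ×ˢ Set.univ))
    (hb₁mono : ∀ t ∈ Set.Icc (0:ℝ) T, ∀ x y : EuclideanSpace ℝ (Fin d),
      0 ≤ ⟪x - y, b₁ t x - b₁ t y⟫)
    (Δ : ℝ)
    (hΔ : ∀ t ∈ Set.Icc (0:ℝ) T, ∀ x : EuclideanSpace ℝ (Fin d),
      ‖b₁ t x - b₂ t x‖ / (1 + ‖x‖ ^ (2 * q)) ≤ Δ)
    (w Y Z : ℝ → EuclideanSpace ℝ (Fin d))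
    (hYc : ContinuousOn Y (Set.Icc 0 T)) (hZc : ContinuousOn Z (Set.Icc 0 T))
    (hY : ∀ t ∈ Set.Icc (0:ℝ) T,
      Y t = Y 0 + (∫ s in (0:ℝ)..t, (V (Y s) - b₁ s (Y s))) + w t)
    (hZ : ∀ t ∈ Set.Icc (0:ℝ) T,
      Z t = Z 0 + (∫ s in (0:ℝ)..t, (V (Z s) - b₂ s (Z s))) + w t)
    (h0 : Y 0 = Z 0) :
    ∀ t ∈ Set.Icc (0:ℝ) T,
      ‖Y t - Z t‖ ≤ Real.exp (K * T) * Δ * ∫ s in (0:ℝ)..t, (1 + ‖Z s‖ ^ (2 * q)) := by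
  intro t ht
  have hΔ₀ : 0 ≤ Δ :=
    (div_nonneg (norm_nonneg _) (by positivity)).trans (hΔ 0 ⟨le_rfl, ht.1.trans ht.2⟩ 0)
  have hFY := continuousOn_drift hVc hb₁c hYc
  have hFZ := continuousOn_drift hVc hb₂c hZc
  have hbound : ∀ s ∈ Ioo 0 T, ⟪Y s - Z s, (V (Y s) - b₁ s (Y s)) - (V (Z s) - b₂ s (Z s))⟫
      ≤ K * ‖Y s - Z s‖ ^ 2 + ‖Y s - Z s‖ * (Δ * (1 + ‖Z s‖ ^ (2 * q))) := fun s hs => by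
    refine (inner_sub_drift_sub_le (hV _ _) (hb₁mono s (Ioo_subset_Icc_self hs) _ _)).trans ?_
    gcongr
    rw [← div_le_iff₀ (by positivity)]
    exact hΔ s (Ioo_subset_Icc_self hs) (Z s)
  calc ‖Y t - Z t‖
      ≤ exp (K * (t - 0)) * (‖Y 0 - Z 0‖ + ∫ s in (0:ℝ)..t, Δ * (1 + ‖Z s‖ ^ (2 * q))) :=
        norm_le_exp_mul_add_integral_of_inner_hasDerivAt_le hK.le (hYc.sub hZc)
          (hasDerivAt_sub_of_eq_integral_add hFY hFZ hY hZ)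
          (by fun_prop) (fun s _ => by positivity) hbound t ht
    _ = exp (K * t) * Δ * ∫ s in (0:ℝ)..t, (1 + ‖Z s‖ ^ (2 * q)) := by
        rw [h0, sub_self, norm_zero, zero_add, intervalIntegral.integral_const_mul, sub_zero]
        ring
    _ ≤ exp (K * T) * Δ * ∫ s in (0:ℝ)..t, (1 + ‖Z s‖ ^ (2 * q)) := by
        have : 0 ≤ ∫ s in (0:ℝ)..t, (1 + ‖Z s‖ ^ (2 * q)) :=
          intervalIntegral.integral_nonneg ht.1 fun s _ => by positivity
        gcongr
        exact ht.2

/-- Lemma 2.7 (pathwise form): comparison of two diffusions driven by the same noise path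
but with different drift terms `b¹, b²`, where `b¹` is monotone in the space variable. -/
theorem lemma_2_7 (d : ℕ) (hd : 1 ≤ d) (T : ℝ) (hT : 0 < T) (q : ℕ) (K : ℝ) (hK : 0 < K)
    (V : EuclideanSpace ℝ (Fin d) → EuclideanSpace ℝ (Fin d)) (hVc : Continuous V)
    (hV : ∀ x y : EuclideanSpace ℝ (Fin d), ⟪x - y, V x - V y⟫ ≤ K * ‖x - y‖ ^ 2)
    (b₁ b₂ : ℝ → EuclideanSpace ℝ (Fin d) → EuclideanSpace ℝ (Fin d))
    (hb₁c : ContinuousOn (fun p : ℝ × EuclideanSpace ℝ (Fin d) => b₁ p.1 p.2)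
      (Set.Icc 0 T ×ˢ Set.univ))
    (hb₂c : ContinuousOn (fun p : ℝ × EuclideanSpace ℝ (Fin d) => b₂ p.1 p.2)
      (Set.Icc 0 T ×ˢ Set.univ))
    (hb₁mono : ∀ t ∈ Set.Icc (0:ℝ) T, ∀ x y : EuclideanSpace ℝ (Fin d),
      0 ≤ ⟪x - y, b₁ t x - b₁ t y⟫)
    (Δ : ℝ)
    (hΔ : ∀ t ∈ Set.Icc (0:ℝ) T, ∀ x : EuclideanSpace ℝ (Fin d),
      ‖b₁ t x - b₂ t x‖ / (1 + ‖x‖ ^ (2 * q)) ≤ Δ)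
    (w Y Z : ℝ → EuclideanSpace ℝ (Fin d)) (hw0 : w 0 = 0) (hwc : ContinuousOn w (Set.Icc 0 T))
    (hYc : ContinuousOn Y (Set.Icc 0 T)) (hZc : ContinuousOn Z (Set.Icc 0 T))
    (hY : ∀ t ∈ Set.Icc (0:ℝ) T,
      Y t = Y 0 + (∫ s in (0:ℝ)..t, (V (Y s) - b₁ s (Y s))) + w t)
    (hZ : ∀ t ∈ Set.Icc (0:ℝ) T,
      Z t = Z 0 + (∫ s in (0:ℝ)..t, (V (Z s) - b₂ s (Z s))) + w t)
    (h0 : Y 0 = Z 0) :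
    ∀ t ∈ Set.Icc (0:ℝ) T,
      ‖Y t - Z t‖ ≤ Real.exp (K * T) * Δ * ∫ s in (0:ℝ)..t, (1 + ‖Z s‖ ^ (2 * q)) :=
  lemma_2_7_general d T q K hK V hVc hV b₁ b₂ hb₁c hb₂c hb₁mono Δ hΔ w Y Z hYc hZc hY hZ h0
end

section
/- For every t ≥ 0 one has ‖φ(t) − ψ(t)‖ ≤ max(‖φ(0) − ψ(0)‖, R_1); in particular, if ψ is bounded then the solution φ of the deterministic equation φ̇ = V(φ) − Φ(φ − ψ) is bounded and does not explode. -/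
open scoped RealInnerProductSpace

/-!
Along the difference `u = φ - ψ` one has `d/dt ‖u‖² = 2⟪u, V φ - V ψ⟫ - 2⟪u, Φ u⟫`. Outside the
ball of radius `R₁` the first term is at most `-2η‖u‖² < 0` and the second is nonpositive, so
`‖u‖²` is strictly decreasing whenever `‖u‖ ≥ R₁`. A fencing argument with the constant barrier
`max (‖u 0‖, R₁)²` then shows that `‖u‖` never crosses it.
-/

section

variable {E : Type*} [NormedAddCommGroup E] [InnerProductSpace ℝ E]

theorem norm_le_max_of_inner_deriv_neg {u u' : ℝ → E} {R : ℝ}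
    (hu : ∀ x ≥ (0 : ℝ), HasDerivAt u (u' x) x)
    (hout : ∀ x ≥ (0 : ℝ), R ≤ ‖u x‖ → ⟪u x, u' x⟫ < 0) :
    ∀ t ≥ (0 : ℝ), ‖u t‖ ≤ max ‖u 0‖ R := by
  intro t ht
  set M := max ‖u 0‖ R
  have hM : 0 ≤ M := (norm_nonneg _).trans (le_max_left _ _)
  have hsq : ‖u t‖ ^ 2 ≤ M ^ 2 := by
    refine image_le_of_deriv_right_lt_deriv_boundary (f := (‖u ·‖ ^ 2))
      (B := fun _ => M ^ 2) (B' := fun _ => 0)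
      (fun x hx => (hu x hx.1).norm_sq.continuousAt.continuousWithinAt)
      (fun x hx => (hu x hx.1).norm_sq.hasDerivWithinAt)
      (pow_le_pow_left₀ (norm_nonneg _) (le_max_left _ _) 2)
      (fun _ => hasDerivAt_const _ _) ?_ ⟨ht, le_rfl⟩
    intro x hx hxM
    have hnorm : ‖u x‖ = M := (pow_left_inj₀ (norm_nonneg _) hM two_ne_zero).1 hxM
    have := hout x hx.1 (hnorm ▸ le_max_right _ _)
    linarith
  exact (pow_le_pow_iff_left₀ (norm_nonneg _) hM two_ne_zero).1 hsq

theorem inner_sub_lt_zero_of_dissipative {V Φ : E → E} {η R : ℝ} (hη : 0 < η) (hR : 0 < R)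
    (hdiss : ∀ x y : E, R ≤ ‖x - y‖ → ⟪x - y, V x - V y⟫ ≤ -η * ‖x - y‖ ^ 2)
    (hΦ : ∀ z : E, 0 ≤ ⟪z, Φ z⟫) {x y : E} (hxy : R ≤ ‖x - y‖) :
    ⟪x - y, V x - Φ (x - y) - V y⟫ < 0 := by
  have hsplit : ⟪x - y, V x - Φ (x - y) - V y⟫
      = ⟪x - y, V x - V y⟫ - ⟪x - y, Φ (x - y)⟫ := by
    rw [← inner_sub_right, sub_right_comm]
  have hpos : 0 < η * ‖x - y‖ ^ 2 := mul_pos hη (pow_pos (hR.trans_le hxy) 2)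
  linarith [hdiss x y hxy, hΦ (x - y)]

end

theorem phi_bounded_general (d : ℕ)
    (V : EuclideanSpace ℝ (Fin d) → EuclideanSpace ℝ (Fin d))
    (η R₁ : ℝ) (hη : 0 < η) (hR₁ : 0 < R₁)
    (hdiss : ∀ x y : EuclideanSpace ℝ (Fin d), R₁ ≤ ‖x - y‖ →
      ⟪x - y, V x - V y⟫ ≤ -η * ‖x - y‖ ^ 2)
    (Φ : EuclideanSpace ℝ (Fin d) → EuclideanSpace ℝ (Fin d))
    (hΦpos : ∀ z : EuclideanSpace ℝ (Fin d), 0 ≤ ⟪z, Φ z⟫)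
    (ψ φ : ℝ → EuclideanSpace ℝ (Fin d))
    (hψ : ∀ t ≥ (0:ℝ), HasDerivAt ψ (V (ψ t)) t)
    (hφ : ∀ t ≥ (0:ℝ), HasDerivAt φ (V (φ t) - Φ (φ t - ψ t)) t) :
    ∀ t ≥ (0:ℝ), ‖φ t - ψ t‖ ≤ max ‖φ 0 - ψ 0‖ R₁ :=
  norm_le_max_of_inner_deriv_neg (u := φ - ψ) (fun x hx => (hφ x hx).sub (hψ x hx))
    fun _ _ hx => inner_sub_lt_zero_of_dissipative hη hR₁ hdiss hΦpos hx

/-- The dissipativity estimate (3.5) of Section 3.1: the solution `φ` of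
`φ̇ = V(φ) − Φ(φ − ψ)` stays within distance `max(‖φ(0) − ψ(0)‖, R₁)` of `ψ`. -/
theorem phi_bounded (d : ℕ) (hd : 1 ≤ d)
    (V : EuclideanSpace ℝ (Fin d) → EuclideanSpace ℝ (Fin d)) (hVc : Continuous V)
    (η R₁ : ℝ) (hη : 0 < η) (hR₁ : 0 < R₁)
    (hdiss : ∀ x y : EuclideanSpace ℝ (Fin d), R₁ ≤ ‖x - y‖ →
      ⟪x - y, V x - V y⟫ ≤ -η * ‖x - y‖ ^ 2)
    (Φ : EuclideanSpace ℝ (Fin d) → EuclideanSpace ℝ (Fin d)) (hΦc : Continuous Φ)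
    (hΦpos : ∀ z : EuclideanSpace ℝ (Fin d), 0 ≤ ⟪z, Φ z⟫)
    (ψ φ : ℝ → EuclideanSpace ℝ (Fin d))
    (hψ : ∀ t ≥ (0:ℝ), HasDerivAt ψ (V (ψ t)) t)
    (hφ : ∀ t ≥ (0:ℝ), HasDerivAt φ (V (φ t) - Φ (φ t - ψ t)) t) :
    ∀ t ≥ (0:ℝ), ‖φ t - ψ t‖ ≤ max ‖φ 0 - ψ 0‖ R₁ :=
  phi_bounded_general d V η R₁ hη hR₁ hdiss Φ hΦpos ψ φ hψ hφ
end

section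
/- For every integer n ≥ 1 one has 2 E[ξ^{2n+2}] ≤ E[(ξ − ξ̃)^{2n+2}] + 2^{2n+2} (1 + E[ξ^{2n}])². -/
/-!
Write `m = 2n + 2` and `M k = E[ξ^k]`. By the binomial theorem, independence and equal
distribution, `E[(ξ - ξ̃)^m] = ∑ₖ (-1)^k C(m,k) M k M (m - k)`. The terms `k = 0` and `k = m`
give `2 M m`; the terms `k = 1` and `k = m - 1` vanish since `M 1 = 0`; in all the others both
exponents are at most `2n`, so `|M k| ≤ E[1 + |ξ|^{2n}] = B` and each of them is at least
`-C(m,k) B²`. Summing, `E[(ξ - ξ̃)^m] ≥ 2 M m - 2^m B²`.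
-/

open MeasureTheory ProbabilityTheory Finset

lemma abs_pow_le_one_add_abs_pow (x : ℝ) {k j : ℕ} (hkj : k ≤ j) : |x| ^ k ≤ 1 + |x| ^ j := by
  rcases le_or_gt |x| 1 with h | h
  · linarith [pow_le_one₀ (abs_nonneg x) h (n := k), pow_nonneg (abs_nonneg x) j]
  · linarith [pow_le_pow_right₀ h.le hkj]

lemma two_mul_sub_two_pow_mul_sq_le_sum_choose {M : ℕ → ℝ} {B : ℝ} {m : ℕ} (hm : Even m)
    (hm0 : m ≠ 0) (h0 : M 0 = 1) (h1 : M 1 = 0) (hB : ∀ k, 2 ≤ k → k + 2 ≤ m → |M k| ≤ B) :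
    2 * M m - 2 ^ m * B ^ 2 ≤
      ∑ k ∈ range (m + 1), (-1) ^ (k + m) * M k * M (m - k) * m.choose k := by
  have hprod : ∀ k, 0 < k → k < m → |M k * M (m - k)| ≤ B ^ 2 := by
    intro k hk hkm
    obtain rfl | hmk | ⟨hk2, hkm2⟩ : k = 1 ∨ m - k = 1 ∨ (2 ≤ k ∧ k + 2 ≤ m) := by omega
    · simp only [h1, zero_mul, abs_zero]; positivity
    · simp only [hmk, h1, mul_zero, abs_zero]; positivity
    · rw [abs_mul, sq]
      exact mul_le_mul (hB k hk2 hkm2) (hB (m - k) (by omega) (by omega)) (abs_nonneg _)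
        ((abs_nonneg _).trans (hB k hk2 hkm2))
  have hterm : ∀ k ∈ range (m + 1),
      (if k = 0 then M m else 0) + (if k = m then M m else 0) - m.choose k * B ^ 2 ≤
        (-1) ^ (k + m) * M k * M (m - k) * m.choose k := by
    intro k hk
    have hkm : k ≤ m := Nat.lt_succ_iff.mp (mem_range.mp hk)
    by_cases hk0 : k = 0
    · subst hk0
      have hend : (-1) ^ (0 + m) * M 0 * M (m - 0) * m.choose 0 = M m := by
        simp [hm.neg_one_pow, h0]
      rw [hend, if_pos rfl, if_neg (Ne.symm hm0), Nat.choose_zero_right, Nat.cast_one]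
      linarith [sq_nonneg B]
    by_cases hkm' : k = m
    · subst hkm'
      have hend : (-1) ^ (k + k) * M k * M (k - k) * k.choose k = M k := by
        simp [← two_mul, h0]
      rw [hend, if_neg hk0, if_pos rfl, Nat.choose_self, Nat.cast_one]
      linarith [sq_nonneg B]
    have hbound : |(-1) ^ (k + m) * M k * M (m - k) * m.choose k| ≤ m.choose k * B ^ 2 := by
      rw [mul_assoc _ (M k), abs_mul, abs_mul, abs_neg_one_pow, one_mul, Nat.abs_cast, mul_comm]
      exact mul_le_mul_of_nonneg_left (hprod k (by omega) (by omega)) (Nat.cast_nonneg _)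
    rw [if_neg hk0, if_neg hkm', add_zero, zero_sub]
    exact neg_le_of_abs_le hbound
  calc 2 * M m - 2 ^ m * B ^ 2
      = ∑ k ∈ range (m + 1),
          ((if k = 0 then M m else 0) + (if k = m then M m else 0) - m.choose k * B ^ 2) := by
        rw [sum_sub_distrib, sum_add_distrib, sum_ite_eq', sum_ite_eq', ← sum_mul, ← Nat.cast_sum,
          Nat.sum_range_choose]
        simp only [mem_range, Nat.zero_lt_succ, Nat.lt_succ_self, if_true]
        push_cast
        ring
    _ ≤ _ := sum_le_sum hterm

section Moments

variable {Ω : Type*} [MeasurableSpace Ω] {μ : Measure Ω} {X Y : Ω → ℝ}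

lemma integrable_pow_of_integrable_abs_pow [IsFiniteMeasure μ] (hX : AEStronglyMeasurable X μ)
    {k j : ℕ} (hj : Integrable (fun ω => |X ω| ^ j) μ) (hkj : k ≤ j) :
    Integrable (fun ω => X ω ^ k) μ :=
  (integrable_const 1).add hj |>.mono' (hX.pow k) <| .of_forall fun ω => by
    simpa only [Pi.pow_apply, Pi.add_apply, norm_pow, Real.norm_eq_abs] using
      abs_pow_le_one_add_abs_pow (X ω) hkj

lemma abs_integral_pow_le_one_add_integral_pow [IsProbabilityMeasure μ] {k j : ℕ}
    (hj : Integrable (fun ω => X ω ^ (2 * j)) μ) (hkj : k ≤ 2 * j) :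
    |∫ ω, X ω ^ k ∂μ| ≤ 1 + ∫ ω, X ω ^ (2 * j) ∂μ := by
  have habs : ∀ ω, X ω ^ (2 * j) = |X ω| ^ (2 * j) := fun ω => (even_two_mul j).pow_abs _ |>.symm
  calc |∫ ω, X ω ^ k ∂μ| ≤ ∫ ω, 1 + X ω ^ (2 * j) ∂μ := by
        rw [← Real.norm_eq_abs]
        exact norm_integral_le_of_norm_le ((integrable_const 1).add hj) <| .of_forall fun ω => by
          simpa only [Pi.add_apply, norm_pow, Real.norm_eq_abs, habs] using
            abs_pow_le_one_add_abs_pow (X ω) hkj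
    _ = 1 + ∫ ω, X ω ^ (2 * j) ∂μ := by
        rw [integral_add (integrable_const 1) hj, integral_const, probReal_univ, one_smul]

theorem ProbabilityTheory.IndepFun.integral_sub_pow (hXY : IndepFun X Y μ) {m : ℕ}
    (hX : ∀ k ≤ m, Integrable (fun ω => X ω ^ k) μ)
    (hY : ∀ k ≤ m, Integrable (fun ω => Y ω ^ k) μ) :
    ∫ ω, (X ω - Y ω) ^ m ∂μ = ∑ k ∈ range (m + 1),
      (-1) ^ (k + m) * (∫ ω, X ω ^ k ∂μ) * (∫ ω, Y ω ^ (m - k) ∂μ) * m.choose k := by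
  have hpow : ∀ k j, IndepFun (fun ω => X ω ^ k) (fun ω => Y ω ^ j) μ := fun k j =>
    hXY.comp (measurable_id.pow_const k) (measurable_id.pow_const j)
  have hterm : ∀ k ∈ range (m + 1),
      Integrable (fun ω => (-1) ^ (k + m) * X ω ^ k * Y ω ^ (m - k) * m.choose k) μ := by
    intro k hk
    have hk : k ≤ m := Nat.lt_succ_iff.mp (mem_range.mp hk)
    simpa only [Pi.mul_apply, mul_assoc] using
      (((hpow k (m - k)).integrable_mul (hX k hk) (hY _ (Nat.sub_le m k))).mul_const
        (m.choose k : ℝ)).const_mul ((-1) ^ (k + m))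
  simp_rw [sub_pow]
  rw [integral_finsetSum _ hterm]
  refine sum_congr rfl fun k hk => ?_
  have hk : k ≤ m := Nat.lt_succ_iff.mp (mem_range.mp hk)
  simp_rw [mul_right_comm _ _ (m.choose k : ℝ), mul_assoc _ (X _ ^ k)]
  rw [integral_const_mul, (hpow k (m - k)).integral_fun_mul_eq_mul_integral
    (hX k hk).aestronglyMeasurable (hY _ (Nat.sub_le m k)).aestronglyMeasurable]
  ring

end Moments

theorem centered_moment_bound_general {Ω : Type*} [MeasurableSpace Ω]
    (μ : Measure Ω) [IsProbabilityMeasure μ]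
    (ξ ξ' : Ω → ℝ)
    (hind : IndepFun ξ ξ' μ) (hid : IdentDistrib ξ ξ' μ μ)
    (n : ℕ)
    (hmean : (∫ ω, ξ ω ∂μ) = 0)
    (hmom : Integrable (fun ω => |ξ ω| ^ (2 * n + 2)) μ) :
    2 * (∫ ω, (ξ ω) ^ (2 * n + 2) ∂μ) ≤
      (∫ ω, (ξ ω - ξ' ω) ^ (2 * n + 2) ∂μ) +
        2 ^ (2 * n + 2) * (1 + ∫ ω, (ξ ω) ^ (2 * n) ∂μ) ^ 2 := by
  have hint : ∀ k ≤ 2 * n + 2, Integrable (fun ω => ξ ω ^ k) μ := fun k hk =>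
    integrable_pow_of_integrable_abs_pow hid.aemeasurable_fst.aestronglyMeasurable hmom hk
  have hint' : ∀ k ≤ 2 * n + 2, Integrable (fun ω => ξ' ω ^ k) μ := fun k hk =>
    (hid.comp (measurable_id.pow_const k)).integrable_iff.1 (hint k hk)
  have hmoment : ∀ k, ∫ ω, ξ' ω ^ k ∂μ = ∫ ω, ξ ω ^ k ∂μ := fun k =>
    (hid.comp (measurable_id.pow_const k)).integral_eq.symm
  have hbound := two_mul_sub_two_pow_mul_sq_le_sum_choose (M := fun k => ∫ ω, ξ ω ^ k ∂μ)
    (B := 1 + ∫ ω, ξ ω ^ (2 * n) ∂μ) (m := 2 * n + 2) ⟨n + 1, by ring⟩ (by omega) (by simp)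
    (by simpa using hmean)
    fun k _ hk => abs_integral_pow_le_one_add_integral_pow (hint _ (by omega)) (by omega)
  rw [hind.integral_sub_pow hint hint']
  simp only [hmoment]
  linarith

/-- The moment inequality for independent centered identically distributed copies
(Step 3 of the proof of Proposition 2.12):
`2 E[ξ^{2n+2}] ≤ E[(ξ − ξ̃)^{2n+2}] + 2^{2n+2} (1 + E[ξ^{2n}])²`. -/
theorem centered_moment_bound {Ω : Type*} [MeasurableSpace Ω]
    (μ : Measure Ω) [IsProbabilityMeasure μ]
    (ξ ξ' : Ω → ℝ) (hξ : Measurable ξ) (hξ' : Measurable ξ')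
    (hind : IndepFun ξ ξ' μ) (hid : IdentDistrib ξ ξ' μ μ)
    (n : ℕ) (hn : 1 ≤ n)
    (hmean : (∫ ω, ξ ω ∂μ) = 0)
    (hmom : Integrable (fun ω => |ξ ω| ^ (2 * n + 2)) μ) :
    2 * (∫ ω, (ξ ω) ^ (2 * n + 2) ∂μ) ≤
      (∫ ω, (ξ ω - ξ' ω) ^ (2 * n + 2) ∂μ) +
        2 ^ (2 * n + 2) * (1 + ∫ ω, (ξ ω) ^ (2 * n) ∂μ) ^ 2 :=
  centered_moment_bound_general μ ξ ξ' hind hid n hmean hmom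
end

section
/- For every m with 1 ≤ m ≤ M and every t ≥ 0 one has h_m(t) ≤ Σ_{j=0}^{m} h_{m−j}(0) (α_m t)^j / j! + 2m (c / α_m) R_1^{2m+1} Σ_{j=1}^{m} (α_m t)^j / (R_1^{2j} j!). -/
/-!
Fix `m` and freeze the rate at `β = α_m`: as `α` is increasing and the integrals are nonnegative,
every `h_k` with `k ≤ m` obeys the recursion with the constant rate `β`. The right-hand side
`B_k` of the bound, with `β` in place of `α_k`, is a supersolution of this recursion:
`β ∫₀ᵗ B_k` reproduces its polynomial part exactly and its forcing part up to the factor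
`k ≤ k + 1`. Induction on `k` and monotonicity of the integral then give `h_k ≤ B_k`.
-/

open Finset Nat

theorem sum_Icc_one_succ_eq_add_sum_Icc_one {M : Type*} [AddCommMonoid M] (f : ℕ → M)
    (k : ℕ) :
    ∑ j ∈ Icc 1 (k + 1), f j = f 1 + ∑ j ∈ Icc 1 k, f (j + 1) := by
  induction k with
  | zero => simp
  | succ k ih => rw [sum_Icc_succ_top (by omega), ih, sum_Icc_succ_top (by omega), add_assoc]

theorem mul_integral_sum_mul_pow_div_factorial (S : Finset ℕ) (a : ℕ → ℝ) (β t : ℝ) :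
    β * ∫ s in (0 : ℝ)..t, ∑ j ∈ S, a j * (β * s) ^ j / j ! =
      ∑ j ∈ S, a j * (β * t) ^ (j + 1) / (j + 1)! := by
  rw [intervalIntegral.integral_finsetSum
    fun j _ => (by fun_prop : Continuous _).intervalIntegrable _ _, mul_sum]
  refine sum_congr rfl fun j _ => ?_
  simp only [mul_pow, intervalIntegral.integral_div, intervalIntegral.integral_const_mul,
    integral_pow, factorial_succ]
  push_cast
  field_simp
  ring

/-- The right-hand side of the bound, with the rate `α_m` replaced by a parameter `β` and the
initial values `h_k(0)` by `a k`. -/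
noncomputable def momentBound (a : ℕ → ℝ) (β c R : ℝ) (m : ℕ) (t : ℝ) : ℝ :=
  (∑ j ∈ range (m + 1), a (m - j) * (β * t) ^ j / j !) +
    2 * m * (c / β) * R ^ (2 * m + 1) * ∑ j ∈ Icc 1 m, (β * t) ^ j / (R ^ (2 * j) * j !)

theorem momentBound_zero (a : ℕ → ℝ) (β c R t : ℝ) : momentBound a β c R 0 t = a 0 := by
  simp [momentBound]

theorem continuous_momentBound (a : ℕ → ℝ) (β c R : ℝ) (m : ℕ) :
    Continuous (momentBound a β c R m) := by
  unfold momentBound; fun_prop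

theorem add_mul_integral_momentBound_forcing_le {β c R t : ℝ} (hβ : 0 < β) (hR : 0 < R)
    (hc : 0 ≤ c) (ht : 0 ≤ t) (k : ℕ) :
    2 * (k + 1) * c * t * R ^ (2 * k + 1) +
        β * ∫ s in (0 : ℝ)..t, 2 * k * (c / β) * R ^ (2 * k + 1) *
          ∑ j ∈ Icc 1 k, (β * s) ^ j / (R ^ (2 * j) * j !) ≤
      2 * ↑(k + 1) * (c / β) * R ^ (2 * (k + 1) + 1) *
        ∑ j ∈ Icc 1 (k + 1), (β * t) ^ j / (R ^ (2 * j) * j !) := by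
  set C := 2 * k * (c / β) * R ^ (2 * k + 1)
  have h_coeff : ∀ s : ℝ, ∑ j ∈ Icc 1 k, (β * s) ^ j / (R ^ (2 * j) * j !) =
      ∑ j ∈ Icc 1 k, (R ^ (2 * j))⁻¹ * (β * s) ^ j / j ! := fun s =>
    sum_congr rfl fun j _ => by ring
  simp_rw [h_coeff, intervalIntegral.integral_const_mul, mul_left_comm β,
    mul_integral_sum_mul_pow_div_factorial, sum_Icc_one_succ_eq_add_sum_Icc_one, mul_add,
    mul_sum]
  refine add_le_add (le_of_eq ?_) (sum_le_sum fun j _ => ?_)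
  · push_cast
    field_simp
    ring
  · set X := 2 * (c / β) * R ^ (2 * k + 1) * (β * t) ^ (j + 1) / (R ^ (2 * j) * (j + 1)!)
    have hX : 0 ≤ X := by positivity
    calc C * ((R ^ (2 * j))⁻¹ * (β * t) ^ (j + 1) / (j + 1)!) = k * X := by
          simp only [C, X]; field_simp
      _ ≤ (k + 1) * X := by gcongr; linarith
      _ = _ := by simp only [X]; push_cast; field_simp; ring

theorem add_mul_integral_momentBound_le (a : ℕ → ℝ) {β c R t : ℝ} (hβ : 0 < β)
    (hR : 0 < R) (hc : 0 ≤ c) (ht : 0 ≤ t) (k : ℕ) :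
    a (k + 1) + 2 * (k + 1) * c * t * R ^ (2 * k + 1) +
        β * ∫ s in (0 : ℝ)..t, momentBound a β c R k s ≤
      momentBound a β c R (k + 1) t := by
  set C := 2 * k * (c / β) * R ^ (2 * k + 1)
  have h_poly :
      a (k + 1) + β * ∫ s in (0 : ℝ)..t, ∑ j ∈ range (k + 1), a (k - j) * (β * s) ^ j / j ! =
      ∑ j ∈ range (k + 1 + 1), a (k + 1 - j) * (β * t) ^ j / j ! := by
    rw [mul_integral_sum_mul_pow_div_factorial, sum_range_succ' _ (k + 1)]
    simp [add_comm]
  have h_split : β * ∫ s in (0 : ℝ)..t, momentBound a β c R k s =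
      (β * ∫ s in (0 : ℝ)..t, ∑ j ∈ range (k + 1), a (k - j) * (β * s) ^ j / j !) +
        β * ∫ s in (0 : ℝ)..t, C * ∑ j ∈ Icc 1 k, (β * s) ^ j / (R ^ (2 * j) * j !) := by
    have h_poly_cont :
        Continuous fun s : ℝ => ∑ j ∈ range (k + 1), a (k - j) * (β * s) ^ j / j ! := by
      fun_prop
    have h_forcing_cont : Continuous fun s : ℝ =>
        C * ∑ j ∈ Icc 1 k, (β * s) ^ j / (R ^ (2 * j) * j !) := by
      fun_prop
    rw [← mul_add, ← intervalIntegral.integral_add (h_poly_cont.intervalIntegrable _ _)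
      (h_forcing_cont.intervalIntegrable _ _)]
    rfl
  rw [h_split, momentBound]
  linarith [add_mul_integral_momentBound_forcing_le hβ hR hc ht k]

theorem le_of_le_add_mul_integral {u B F : ℕ → ℝ → ℝ} {β : ℝ} {n : ℕ} (hβ : 0 ≤ β)
    (hu : ∀ m < n, ContinuousOn (u m) (Set.Ici 0))
    (hB : ∀ m < n, ContinuousOn (B m) (Set.Ici 0))
    (h_zero : ∀ t ≥ (0 : ℝ), u 0 t ≤ B 0 t)
    (hu_rec : ∀ m < n, ∀ t ≥ (0 : ℝ), u (m + 1) t ≤ F m t + β * ∫ s in (0 : ℝ)..t, u m s)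
    (hB_rec : ∀ m < n, ∀ t ≥ (0 : ℝ), F m t + β * ∫ s in (0 : ℝ)..t, B m s ≤ B (m + 1) t) :
    ∀ m ≤ n, ∀ t ≥ (0 : ℝ), u m t ≤ B m t := by
  intro m
  induction m with
  | zero => exact fun _ => h_zero
  | succ m ih =>
    intro hm t ht
    have hmn : m < n := hm
    have h_sub : Set.uIcc 0 t ⊆ Set.Ici 0 := by
      rw [Set.uIcc_of_le ht]; exact Set.Icc_subset_Ici_self
    have h_int : ∫ s in (0 : ℝ)..t, u m s ≤ ∫ s in (0 : ℝ)..t, B m s :=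
      intervalIntegral.integral_mono_on ht (((hu m hmn).mono h_sub).intervalIntegrable)
        (((hB m hmn).mono h_sub).intervalIntegrable) fun s hs => ih hmn.le s hs.1
    calc u (m + 1) t ≤ F m t + β * ∫ s in (0 : ℝ)..t, u m s := hu_rec m hmn t ht
      _ ≤ F m t + β * ∫ s in (0 : ℝ)..t, B m s := by gcongr
      _ ≤ B (m + 1) t := hB_rec m hmn t ht

theorem moment_recursion_general (ε R₁ c : ℝ) (hε : 0 < ε) (hR₁ : 0 < R₁) (hc : 0 ≤ c)
    (d : ℕ) (hd : 1 ≤ d) (M : ℕ)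
    (h : ℕ → ℝ → ℝ)
    (hcont : ∀ m ≤ M, ContinuousOn (h m) (Set.Ici 0))
    (hnonneg : ∀ m ≤ M, ∀ t ≥ (0:ℝ), 0 ≤ h m t)
    (h0 : ∀ t ≥ (0:ℝ), h 0 t = 1)
    (hrec : ∀ m, 1 ≤ m → m ≤ M → ∀ t ≥ (0:ℝ),
      h m t ≤ h m 0 + 2 * (m : ℝ) * c * t * R₁ ^ (2 * m - 1) +
        (ε * m * ((d : ℝ) + 2 * m - 2)) * ∫ s in (0:ℝ)..t, h (m - 1) s) :
    ∀ m, 1 ≤ m → m ≤ M → ∀ t ≥ (0:ℝ),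
      h m t ≤
        (∑ j ∈ Finset.range (m + 1),
          h (m - j) 0 * (ε * m * ((d : ℝ) + 2 * m - 2) * t) ^ j / (Nat.factorial j)) +
        2 * (m : ℝ) * (c / (ε * m * ((d : ℝ) + 2 * m - 2))) * R₁ ^ (2 * m + 1) *
          ∑ j ∈ Finset.Icc 1 m,
            (ε * m * ((d : ℝ) + 2 * m - 2) * t) ^ j / (R₁ ^ (2 * j) * (Nat.factorial j)) := by
  intro m hm hmM t ht
  set α : ℕ → ℝ := fun k => ε * k * ((d : ℝ) + 2 * k - 2)
  have hd' : (1 : ℝ) ≤ d := by exact_mod_cast hd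
  have hm' : (1 : ℝ) ≤ m := by exact_mod_cast hm
  have hα_pos : 0 < α m := mul_pos (mul_pos hε (by linarith)) (by linarith)
  have hα_le : ∀ k < m, α (k + 1) ≤ α m := by
    intro k hk
    have hk' : (k : ℝ) + 1 ≤ m := by exact_mod_cast hk
    simp only [α]
    push_cast
    nlinarith [mul_nonneg hε.le
      (mul_nonneg (sub_nonneg.2 hk') (by linarith : (0 : ℝ) ≤ d - 2 + 2 * m + 2 * (k + 1)))]
  refine le_of_le_add_mul_integral (u := h) (B := momentBound (fun k => h k 0) (α m) c R₁)
    (F := fun k t => h (k + 1) 0 + 2 * (k + 1) * c * t * R₁ ^ (2 * k + 1)) hα_pos.le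
    (fun k hk => hcont k (by omega)) (fun k _ => (continuous_momentBound ..).continuousOn)
    (fun t ht => by rw [momentBound_zero, h0 t ht, h0 0 le_rfl]) ?_
    (fun k _ t ht => add_mul_integral_momentBound_le (fun k => h k 0) hα_pos hR₁ hc ht k)
    m le_rfl t ht
  intro k hk t ht
  have h_int_nonneg : 0 ≤ ∫ s in (0 : ℝ)..t, h k s :=
    intervalIntegral.integral_nonneg ht fun s hs => hnonneg k (by omega) s hs.1
  calc h (k + 1) t ≤ h (k + 1) 0 + 2 * (k + 1) * c * t * R₁ ^ (2 * k + 1) +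
        α (k + 1) * ∫ s in (0 : ℝ)..t, h k s := by
        simpa [α, show 2 * (k + 1) - 1 = 2 * k + 1 by omega] using
          hrec (k + 1) (by omega) (by omega) t ht
    _ ≤ _ := by gcongr; exact hα_le k hk

/-- The inductive moment bound (2.19) in the proof of Lemma 2.8: if the functions
`h m` (standing for `E‖Z_t‖^{2m}`) satisfy the recursive integral inequality, then they
satisfy the explicit bound. Here `α m = ε m (d + 2m − 2)` and `c = ‖V(0)‖`. -/
theorem moment_recursion (ε R₁ c : ℝ) (hε : 0 < ε) (hR₁ : 0 < R₁) (hc : 0 ≤ c)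
    (d : ℕ) (hd : 1 ≤ d) (M : ℕ) (hM : 1 ≤ M)
    (h : ℕ → ℝ → ℝ)
    (hcont : ∀ m ≤ M, ContinuousOn (h m) (Set.Ici 0))
    (hnonneg : ∀ m ≤ M, ∀ t ≥ (0:ℝ), 0 ≤ h m t)
    (h0 : ∀ t ≥ (0:ℝ), h 0 t = 1)
    (hrec : ∀ m, 1 ≤ m → m ≤ M → ∀ t ≥ (0:ℝ),
      h m t ≤ h m 0 + 2 * (m : ℝ) * c * t * R₁ ^ (2 * m - 1) +
        (ε * m * ((d : ℝ) + 2 * m - 2)) * ∫ s in (0:ℝ)..t, h (m - 1) s) :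
    ∀ m, 1 ≤ m → m ≤ M → ∀ t ≥ (0:ℝ),
      h m t ≤
        (∑ j ∈ Finset.range (m + 1),
          h (m - j) 0 * (ε * m * ((d : ℝ) + 2 * m - 2) * t) ^ j / (Nat.factorial j)) +
        2 * (m : ℝ) * (c / (ε * m * ((d : ℝ) + 2 * m - 2))) * R₁ ^ (2 * m + 1) *
          ∑ j ∈ Finset.Icc 1 m,
            (ε * m * ((d : ℝ) + 2 * m - 2) * t) ^ j / (R₁ ^ (2 * j) * (Nat.factorial j)) :=
  moment_recursion_general ε R₁ c hε hR₁ hc d hd M h hcont hnonneg h0 hrec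
end

section
/- For every δ > 0 there exists ϱ > 0 such that for all x, y in the ball B_ϱ(x_stable) = {z ∈ ℝ^d : ‖z − x_stable‖ < ϱ} one has inf_{t ∈ (0,1]} C^s(x, y, t) < δ; that is, the cost of connecting two points near x_stable within time at most 1 is uniformly small. -/
/-!
Join `x` and `y` by the straight line traversed in time `t`. If `x` and `y` lie within `t / 2`
of `x_stable` and `t ≤ 1`, the line has speed at most `1` and stays in the unit ball around
`x_stable`, so the integrand of the cost is bounded by a constant `M` depending only on `V`, `Φ`
and the bound on `ψ`. The cost at time `t` is then at most `t M² / 2`, which is below `δ` once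
`t` is small.
-/

open Set Metric Bornology

theorem Real.sInf_lt_of_mem_of_lt {S : Set ℝ} {a δ : ℝ} (ha : a ∈ S) (haδ : a < δ) (hδ : 0 < δ) :
    sInf S < δ := by
  by_cases hS : BddBelow S
  · exact csInf_lt_of_lt hS ha haδ
  · rwa [Real.sInf_of_not_bddBelow hS]

section

variable {E : Type*} [NormedAddCommGroup E]

theorem Continuous.isBounded_image [ProperSpace E] {F : Type*} [NormedAddCommGroup F]
    {g : E → F} (hg : Continuous g) {B : Set E} (hB : IsBounded B) : IsBounded (g '' B) :=
  (hB.isCompact_closure.image hg).isBounded.subset (image_mono subset_closure)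

theorem exists_norm_action_integrand_le [ProperSpace E] {V Φ : E → E} (hV : Continuous V)
    (hΦ : Continuous Φ) {ψ : ℝ → E} (hψ : IsBounded (range ψ)) {B : Set E} (hB : IsBounded B) :
    ∃ M, ∀ p ∈ B, ∀ v ∈ closedBall (0 : E) 1, ∀ u, ‖v - V p + Φ (p - ψ u)‖ ≤ M := by
  obtain ⟨M, hM⟩ := (((isBounded_closedBall (x := (0 : E)) (r := 1)).sub
    (hV.isBounded_image hB)).add (hΦ.isBounded_image (hB.sub hψ))).exists_norm_le
  exact ⟨M, fun p hp v hv u => hM _ <| add_mem_add (sub_mem_sub hv (mem_image_of_mem V hp))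
    (mem_image_of_mem Φ (sub_mem_sub hp (mem_range_self u)))⟩

variable [NormedSpace ℝ E]

/-- Its infimum is the cost `C^s(x, y, t)`. -/
def actionSet (V Φ : E → E) (ψ : ℝ → E) (s : ℝ) (x y : E) (t : ℝ) : Set ℝ :=
  { e : ℝ | ∃ f f' : ℝ → E,
    ContinuousOn f' (Icc 0 t) ∧ (∀ u ∈ Icc (0:ℝ) t, HasDerivAt f (f' u) u) ∧
    f 0 = x ∧ f t = y ∧
    e = (1/2) * ∫ u in (0:ℝ)..t, ‖f' u - V (f u) + Φ (f u - ψ (u + s))‖ ^ 2 }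

theorem exists_mem_actionSet_le_of_segment {V Φ : E → E} {ψ : ℝ → E} {s : ℝ} {x y : E}
    {B : Set E} (hB : Convex ℝ B) (hx : x ∈ B) (hy : y ∈ B) {t M : ℝ} (ht : 0 < t)
    (hxy : ‖y - x‖ ≤ t)
    (hM : ∀ p ∈ B, ∀ v ∈ closedBall (0 : E) 1, ∀ u, ‖v - V p + Φ (p - ψ u)‖ ≤ M) :
    ∃ e ∈ actionSet V Φ ψ s x y t, e ≤ t * M ^ 2 / 2 := by
  set f : ℝ → E := fun u => AffineMap.lineMap x y (u / t)
  set c : E := (1 / t) • (y - x)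
  have hf : ∀ u, HasDerivAt f c u := fun u =>
    AffineMap.hasDerivAt_lineMap.scomp u ((hasDerivAt_id u).div_const t)
  have hc : c ∈ closedBall (0 : E) 1 := by
    rw [mem_closedBall_zero_iff, norm_smul, norm_div, norm_one, Real.norm_of_nonneg ht.le,
      div_mul_eq_mul_div, one_mul, div_le_one ht]
    exact hxy
  have hbound : ∀ u ∈ uIoc 0 t, ‖‖c - V (f u) + Φ (f u - ψ (u + s))‖ ^ 2‖ ≤ M ^ 2 := by
    intro u hu
    rw [uIoc_of_le ht.le] at hu
    have hfu : f u ∈ B := hB.lineMap_mem hx hy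
      ⟨div_nonneg hu.1.le ht.le, (div_le_one ht).2 hu.2⟩
    rw [norm_pow, norm_norm]
    exact pow_le_pow_left₀ (norm_nonneg _) (hM _ hfu c hc _) 2
  refine ⟨_, ⟨f, fun _ => c, continuousOn_const, fun u _ => hf u, ?_, ?_, rfl⟩, ?_⟩
  · simp [f]
  · simp [f, ht.ne']
  · -- this bound holds without any integrability of the integrand
    have hint := intervalIntegral.norm_integral_le_of_norm_le_const hbound
    rw [sub_zero, abs_of_pos ht, Real.norm_eq_abs] at hint
    linarith [le_abs_self (∫ u in (0:ℝ)..t, ‖c - V (f u) + Φ (f u - ψ (u + s))‖ ^ 2)]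

end

theorem cost_small_near_equilibrium_general (d : ℕ) (s : ℝ)
    (xstable : EuclideanSpace ℝ (Fin d))
    (V Φ : EuclideanSpace ℝ (Fin d) → EuclideanSpace ℝ (Fin d))
    (hV : LocallyLipschitz V) (hΦ : LocallyLipschitz Φ)
    (ψ : ℝ → EuclideanSpace ℝ (Fin d))
    (hψb : ∃ Cb : ℝ, ∀ t : ℝ, ‖ψ t‖ ≤ Cb)
    (C : EuclideanSpace ℝ (Fin d) → EuclideanSpace ℝ (Fin d) → ℝ → ℝ)
    (hC : ∀ (x y : EuclideanSpace ℝ (Fin d)) (t : ℝ), 0 < t →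
      C x y t = sInf { e : ℝ |
        ∃ f f' : ℝ → EuclideanSpace ℝ (Fin d),
          ContinuousOn f' (Set.Icc 0 t) ∧
          (∀ u ∈ Set.Icc (0:ℝ) t, HasDerivAt f (f' u) u) ∧
          f 0 = x ∧ f t = y ∧
          e = (1/2) * ∫ u in (0:ℝ)..t,
            ‖f' u - V (f u) + Φ (f u - ψ (u + s))‖ ^ 2 }) :
    ∀ δ > (0:ℝ), ∃ ϱ > (0:ℝ), ∀ x y : EuclideanSpace ℝ (Fin d),
      ‖x - xstable‖ < ϱ → ‖y - xstable‖ < ϱ →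
      sInf ((fun t => C x y t) '' Set.Ioc (0:ℝ) 1) < δ := by
  intro δ hδ
  obtain ⟨Cb, hCb⟩ := hψb
  obtain ⟨M, hM⟩ := exists_norm_action_integrand_le hV.continuous hΦ.continuous
    (isBounded_iff_forall_norm_le.2 ⟨Cb, forall_mem_range.2 hCb⟩)
    (isBounded_closedBall (x := xstable) (r := 1))
  set t := min 1 (δ / (M ^ 2 + 1))
  have ht : 0 < t := lt_min one_pos (by positivity)
  have ht1 : t ≤ 1 := min_le_left _ _
  have htM : t * M ^ 2 / 2 < δ := by
    have : t * (M ^ 2 + 1) ≤ δ := (le_div_iff₀ (by positivity)).1 (min_le_right _ _)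
    nlinarith
  refine ⟨t / 2, half_pos ht, fun x y hx hy => ?_⟩
  have hxB : x ∈ closedBall xstable 1 := mem_closedBall_iff_norm.2 (by linarith)
  have hyB : y ∈ closedBall xstable 1 := mem_closedBall_iff_norm.2 (by linarith)
  have hxy : ‖y - x‖ ≤ t := by
    linarith [norm_sub_le_norm_sub_add_norm_sub y xstable x, norm_sub_rev x xstable]
  obtain ⟨e, he, het⟩ := exists_mem_actionSet_le_of_segment (s := s) (convex_closedBall _ _)
    hxB hyB ht hxy hM
  have hCt : C x y t < δ := hC x y t ht ▸ Real.sInf_lt_of_mem_of_lt he (het.trans_lt htM) hδ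
  exact Real.sInf_lt_of_mem_of_lt ⟨t, ⟨ht, ht1⟩, rfl⟩ hCt hδ

/-- Lemma 4.4, inequality (4.8): the cost of connecting two points near `x_stable`
within time at most 1 is uniformly small. -/
theorem cost_small_near_equilibrium (d : ℕ) (hd : 1 ≤ d) (s : ℝ) (hs : 0 ≤ s)
    (xstable : EuclideanSpace ℝ (Fin d))
    (V Φ : EuclideanSpace ℝ (Fin d) → EuclideanSpace ℝ (Fin d))
    (hV : LocallyLipschitz V) (hΦ : LocallyLipschitz Φ)
    (ψ : ℝ → EuclideanSpace ℝ (Fin d)) (hψc : Continuous ψ)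
    (hψb : ∃ Cb : ℝ, ∀ t : ℝ, ‖ψ t‖ ≤ Cb)
    (C : EuclideanSpace ℝ (Fin d) → EuclideanSpace ℝ (Fin d) → ℝ → ℝ)
    (hC : ∀ (x y : EuclideanSpace ℝ (Fin d)) (t : ℝ), 0 < t →
      C x y t = sInf { e : ℝ |
        ∃ f f' : ℝ → EuclideanSpace ℝ (Fin d),
          ContinuousOn f' (Set.Icc 0 t) ∧
          (∀ u ∈ Set.Icc (0:ℝ) t, HasDerivAt f (f' u) u) ∧
          f 0 = x ∧ f t = y ∧
          e = (1/2) * ∫ u in (0:ℝ)..t,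
            ‖f' u - V (f u) + Φ (f u - ψ (u + s))‖ ^ 2 }) :
    ∀ δ > (0:ℝ), ∃ ϱ > (0:ℝ), ∀ x y : EuclideanSpace ℝ (Fin d),
      ‖x - xstable‖ < ϱ → ‖y - xstable‖ < ϱ →
      sInf ((fun t => C x y t) '' Set.Ioc (0:ℝ) 1) < δ :=
  cost_small_near_equilibrium_general d s xstable V Φ hV hΦ ψ hψb C hC
end
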